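/- arXiv:1808.07762 — 7 statements merged into one kernel-verified Lean document; each statement's English description precedes it below -/
import Mathlib

section
/- Let (V, E, o, t, inv) be a finite connected multigraph, let m, m' : E → ℝ^d be 1-forms with the same flux function, and let φ, φ' : E → ℝ be 1-forms with the same flux function. Then for every θ ∈ ℝ^d there exists a unitary diagonal operator W(θ) on ℂ^V (multiplication by unimodular scalars depending on the vertex) such that Δ_{m',φ'}(θ) = W(θ)⁻¹ ∘ Δ_{m,φ}(θ) ∘ W(θ); in particular, for every θ the fiber magnetic Laplacians Δ_{m,φ}(θ) and Δ_{m',φ'}(θ) are unitarily equivalent and have the same eigenvalues. (Paper: Theorem 4.4(ii) and Theorem 2.1(iii) at the level of fiber operators.) -/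
open scoped Classical
open Finset

noncomputable section

/-- The degree of a vertex: the number of oriented edges starting at it. -/
def mdeg {V E : Type} [Fintype E] (o : E → V) (v : V) : ℕ :=
  (Finset.univ.filter fun e => o e = v).card

/-- The combinatorial magnetic Laplacian `Δ_α`. -/
def magLap {V E : Type} [Fintype E] (o t : E → V) (α : E → ℝ)
    (f : V → ℂ) (v : V) : ℂ :=
  ∑ e ∈ Finset.univ.filter (fun e => o e = v),
    (f v - Complex.exp (Complex.I * (α e : ℂ)) * f (t e))

/-- The fiber magnetic Laplacian `Δ_{m,φ}(θ)`. -/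
def fiberLap {V E : Type} [Fintype E] {d : ℕ} (o t : E → V)
    (m : E → Fin d → ℝ) (φ : E → ℝ) (θ : Fin d → ℝ) (f : V → ℂ) (v : V) : ℂ :=
  (mdeg o v : ℂ) * f v -
    ∑ e ∈ Finset.univ.filter (fun e => o e = v),
      Complex.exp (Complex.I * ((φ e + ∑ i, m e i * θ i : ℝ) : ℂ)) * f (t e)

/-- Standard inner product on `ℂ^V` (conjugate-linear in the first argument). -/
def dotC {V : Type} [Fintype V] (f g : V → ℂ) : ℂ :=
  ∑ v, (starRingEnd ℂ) (f v) * g v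

/-- `lam` lists the eigenvalues of the operator `T` on `ℂ^V` in nondecreasing
order, counted with multiplicity (witnessed by an orthonormal eigenbasis). -/
def IsEigList {V : Type} [Fintype V] (T : (V → ℂ) → (V → ℂ))
    (lam : Fin (Fintype.card V) → ℝ) : Prop :=
  Monotone lam ∧ ∃ u : Fin (Fintype.card V) → (V → ℂ),
    (∀ i j, dotC (u i) (u j) = if i = j then (1 : ℂ) else 0) ∧
    ∀ i, T (u i) = fun v => ((lam i : ℝ) : ℂ) * u i v

/-- A closed walk in the multigraph. -/
def IsClosedWalk {V E : Type} (o t : E → V) {k : ℕ} (c : Fin (k + 1) → E) : Prop :=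
  (∀ i : Fin k, t (c i.castSucc) = o (c i.succ)) ∧ t (c (Fin.last k)) = o (c 0)

/-- Two forms have the same flux along every closed walk. -/
def SameFlux {V E W : Type} [AddCommMonoid W] (o t : E → V) (b b' : E → W) : Prop :=
  ∀ (k : ℕ) (c : Fin (k + 1) → E), IsClosedWalk o t c →
    ∑ i, b (c i) = ∑ i, b' (c i)

/-- Connectivity of the multigraph: any two distinct vertices are the endpoints
of some walk. -/
def MGConnected {V E : Type} (o t : E → V) : Prop :=
  ∀ u v : V, u ≠ v → ∃ (k : ℕ) (c : Fin (k + 1) → E),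
    (∀ i : Fin k, t (c i.castSucc) = o (c i.succ)) ∧ o (c 0) = u ∧ t (c (Fin.last k)) = v

/-- The set of fluxes of a form along all closed walks. -/
def fluxSet {V E W : Type} [AddCommMonoid W] (o t : E → V) (b : E → W) : Set W :=
  {w | ∃ (k : ℕ) (c : Fin (k + 1) → E), IsClosedWalk o t c ∧ ∑ i, b (c i) = w}

/-- The number of oriented edges in the support of a form. -/
def suppCard {E : Type} [Fintype E] {W : Type} [Zero W] (b : E → W) : ℕ :=
  (Finset.univ.filter fun e => b e ≠ 0).card

/-- The integer lattice `ℤ^d` inside `ℝ^d`. -/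
def intLattice (d : ℕ) : Set (Fin d → ℝ) :=
  {w | ∀ i, ∃ z : ℤ, w i = (z : ℝ)}

/-!
Equal fluxes make the difference `α' - α` of the phases `α e = φ e + ⟨m e, θ⟩` a 1-form with
zero flux, and on a connected graph such a form has a potential: sum it along walks from a base
vertex `v₀` (well defined because a walk to `v` followed by a walk back to `v₀` is closed). With
`w (t e) = w (o e) + α' e - α e`, multiplication by `exp (i w)` is a gauge transformation
carrying `Δ_{m',φ'}(θ)` to `Δ_{m,φ}(θ)`, and it maps eigenvectors to eigenvectors.
-/

section Walks

variable {V E : Type} (o t : E → V)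

/-- Walks as edge lists; unlike the `Fin (k + 1)`-indexed walks above, they may be empty. -/
def IsWalk : V → List E → V → Prop
  | u, [], v => u = v
  | u, e :: l, v => o e = u ∧ IsWalk (t e) l v

variable {o t}

theorem IsWalk.append {u v w : V} {l₁ l₂ : List E} (h₁ : IsWalk o t u l₁ v)
    (h₂ : IsWalk o t v l₂ w) : IsWalk o t u (l₁ ++ l₂) w := by
  induction l₁ generalizing u with
  | nil => exact h₁ ▸ h₂
  | cons e l ih => exact ⟨h₁.1, ih h₁.2⟩

theorem isWalk_ofFn_iff {k : ℕ} {c : Fin (k + 1) → E} {u v : V} :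
    IsWalk o t u (List.ofFn c) v ↔
      (∀ i : Fin k, t (c i.castSucc) = o (c i.succ)) ∧ o (c 0) = u ∧ t (c (Fin.last k)) = v := by
  induction k generalizing u with
  | zero => simp [IsWalk]
  | succ k ih =>
    rw [List.ofFn_succ, IsWalk, ih, Fin.forall_fin_succ]
    simp only [Fin.succ_castSucc, Fin.succ_last, Fin.castSucc_zero, Fin.succ_zero_eq_one]
    tauto

theorem MGConnected.exists_isWalk (hconn : MGConnected o t) (u v : V) :
    ∃ l, IsWalk o t u l v := by
  by_cases huv : u = v
  · exact ⟨[], huv⟩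
  obtain ⟨k, c, hc, hu, hv⟩ := hconn u v huv
  exact ⟨List.ofFn c, isWalk_ofFn_iff.2 ⟨hc, hu, hv⟩⟩

theorem SameFlux.sum_map_eq {W : Type} [AddCommMonoid W] {b b' : E → W}
    (h : SameFlux o t b b') {u : V} {l : List E} (hl : IsWalk o t u l u) :
    (l.map b).sum = (l.map b').sum := by
  cases l with
  | nil => rfl
  | cons e l =>
    rw [← List.ofFn_get (e :: l)] at hl ⊢
    obtain ⟨hc, hu, hv⟩ := isWalk_ofFn_iff.1 hl
    rw [List.map_ofFn, List.map_ofFn, List.sum_ofFn, List.sum_ofFn]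
    exact h _ _ ⟨hc, hv.trans hu.symm⟩

theorem SameFlux.add {W : Type} [AddCommMonoid W] {b b' c c' : E → W}
    (hb : SameFlux o t b b') (hc : SameFlux o t c c') : SameFlux o t (b + c) (b' + c') := by
  intro k γ hγ
  simp only [Pi.add_apply, Finset.sum_add_distrib, hb k γ hγ, hc k γ hγ]

theorem SameFlux.map {W W' : Type} [AddCommMonoid W] [AddCommMonoid W'] {b b' : E → W}
    (h : SameFlux o t b b') (f : W →+ W') : SameFlux o t (f ∘ b) (f ∘ b') := by
  intro k γ hγ
  simp only [Function.comp_apply, ← map_sum, h k γ hγ]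

theorem SameFlux.exists_potential [Nonempty V] {W : Type} [AddCommGroup W] {b b' : E → W}
    (hconn : MGConnected o t) (h : SameFlux o t b b') :
    ∃ w : V → W, ∀ e, w (t e) = w (o e) + (b' e - b e) := by
  obtain ⟨v₀⟩ := ‹Nonempty V›
  choose A hA using hconn.exists_isWalk v₀
  choose B hB using fun v => hconn.exists_isWalk v v₀
  refine ⟨fun v => ((A v).map b').sum - ((A v).map b).sum, fun e => ?_⟩
  have hedge := h.sum_map_eq ((hA (o e)).append (l₂ := e :: B (t e)) ⟨rfl, hB (t e)⟩)
  have hback := h.sum_map_eq ((hA (t e)).append (hB (t e)))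
  simp only [List.map_append, List.map_cons, List.sum_append, List.sum_cons] at hedge hback ⊢
  linear_combination (norm := abel) hedge - hback

end Walks

section Gauge

variable {V E : Type} [Fintype E]

theorem fiberLap_eq_magLap {d : ℕ} (o t : E → V) (m : E → Fin d → ℝ) (φ : E → ℝ)
    (θ : Fin d → ℝ) (f : V → ℂ) (v : V) :
    fiberLap o t m φ θ f v = magLap o t (fun e => φ e + m e ⬝ᵥ θ) f v := by
  rw [fiberLap, magLap, Finset.sum_sub_distrib, Finset.sum_const, nsmul_eq_mul, mdeg]
  rfl

theorem magLap_gauge (o t : E → V) {α α' : E → ℝ} {w : V → ℝ}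
    (hw : ∀ e, w (t e) = w (o e) + (α' e - α e)) (f : V → ℂ) (v : V) :
    Complex.exp (Complex.I * w v) * magLap o t α' f v =
      magLap o t α (fun u => Complex.exp (Complex.I * w u) * f u) v := by
  rw [magLap, magLap, Finset.mul_sum]
  refine Finset.sum_congr rfl fun e he => ?_
  have hphase : Complex.exp (Complex.I * α e) * Complex.exp (Complex.I * w (t e)) =
      Complex.exp (Complex.I * w v) * Complex.exp (Complex.I * α' e) := by
    rw [← Complex.exp_add, ← Complex.exp_add, hw e, (Finset.mem_filter.1 he).2]
    push_cast
    ring_nf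
  linear_combination f (t e) * hphase

end Gauge

theorem exists_eigenvector_iff_of_mul_conj {V K : Type} [Field K] (T T' : (V → K) → V → K)
    {s : V → K} (hs : ∀ v, s v ≠ 0) (hconj : ∀ f v, s v * T' f v = T (fun u => s u * f u) v)
    (μ : K) :
    (∃ f : V → K, f ≠ 0 ∧ ∀ v, T' f v = μ * f v) ↔
      (∃ g : V → K, g ≠ 0 ∧ ∀ v, T g v = μ * g v) := by
  constructor
  · rintro ⟨f, hf0, hf⟩
    refine ⟨fun u => s u * f u, ?_, fun v => ?_⟩
    · obtain ⟨v, hv⟩ := Function.ne_iff.1 hf0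
      exact Function.ne_iff.2 ⟨v, mul_ne_zero (hs v) hv⟩
    · rw [← hconj, hf]
      ring
  · rintro ⟨g, hg0, hg⟩
    have hsf : (fun u => s u * ((s u)⁻¹ * g u)) = g :=
      funext fun u => mul_inv_cancel_left₀ (hs u) (g u)
    refine ⟨fun u => (s u)⁻¹ * g u, ?_, fun v => mul_left_cancel₀ (hs v) ?_⟩
    · refine fun hf0 => hg0 (funext fun u => ?_)
      simpa [hs u] using congrFun hf0 u
    · rw [hconj, hsf, hg, mul_left_comm, mul_inv_cancel_left₀ (hs v)]

theorem fiberLap_unitary_equivalence_general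
    {V E : Type} [Fintype E] [Nonempty V] {d : ℕ}
    (o t : E → V)
    (hconn : MGConnected o t)
    (m m' : E → Fin d → ℝ) (hfluxm : SameFlux o t m m')
    (φ φ' : E → ℝ) (hfluxφ : SameFlux o t φ φ') :
    ∀ θ : Fin d → ℝ, ∃ w : V → ℝ,
      (∀ (f : V → ℂ) (v : V),
        Complex.exp (Complex.I * (w v : ℂ)) * fiberLap o t m' φ' θ f v =
          fiberLap o t m φ θ (fun u => Complex.exp (Complex.I * (w u : ℂ)) * f u) v) ∧
      ∀ μ : ℝ,
        (∃ f : V → ℂ, f ≠ 0 ∧ ∀ v, fiberLap o t m' φ' θ f v = (μ : ℂ) * f v) ↔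
        (∃ g : V → ℂ, g ≠ 0 ∧ ∀ v, fiberLap o t m φ θ g v = (μ : ℂ) * g v) := by
  intro θ
  have hflux : SameFlux o t (φ + fun e => m e ⬝ᵥ θ) (φ' + fun e => m' e ⬝ᵥ θ) :=
    hfluxφ.add (hfluxm.map (AddMonoidHom.mk' (· ⬝ᵥ θ) fun x y => add_dotProduct x y θ))
  obtain ⟨w, hw⟩ := hflux.exists_potential hconn
  have hconj : ∀ (f : V → ℂ) (v : V),
      Complex.exp (Complex.I * (w v : ℂ)) * fiberLap o t m' φ' θ f v =
        fiberLap o t m φ θ (fun u => Complex.exp (Complex.I * (w u : ℂ)) * f u) v := by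
    simp only [fiberLap_eq_magLap]
    exact magLap_gauge o t hw
  exact ⟨w, hconj, fun μ =>
    exists_eigenvector_iff_of_mul_conj _ _ (fun v => Complex.exp_ne_zero _) hconj μ⟩

/-- If `m, m'` have the same flux function and `φ, φ'` have the same flux
function on a connected multigraph, then for every `θ` the fiber magnetic
Laplacians `Δ_{m,φ}(θ)` and `Δ_{m',φ'}(θ)` are unitarily equivalent via a
diagonal unitary multiplication by unimodular scalars; in particular they have
the same eigenvalues. -/
theorem fiberLap_unitary_equivalence
    {V E : Type} [Fintype V] [Fintype E] [Nonempty V] {d : ℕ}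
    (o t : E → V) (inv : E → E)
    (hfp : ∀ e, inv e ≠ e) (hinv : ∀ e, inv (inv e) = e)
    (hoi : ∀ e, o (inv e) = t e) (hti : ∀ e, t (inv e) = o e)
    (hconn : MGConnected o t)
    (m m' : E → Fin d → ℝ) (hm : ∀ e, m (inv e) = - m e)
    (hm' : ∀ e, m' (inv e) = - m' e) (hfluxm : SameFlux o t m m')
    (φ φ' : E → ℝ) (hφ : ∀ e, φ (inv e) = - φ e)
    (hφ' : ∀ e, φ' (inv e) = - φ' e) (hfluxφ : SameFlux o t φ φ') :
    ∀ θ : Fin d → ℝ, ∃ w : V → ℝ,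
      (∀ (f : V → ℂ) (v : V),
        Complex.exp (Complex.I * (w v : ℂ)) * fiberLap o t m' φ' θ f v =
          fiberLap o t m φ θ (fun u => Complex.exp (Complex.I * (w u : ℂ)) * f u) v) ∧
      ∀ μ : ℝ,
        (∃ f : V → ℂ, f ≠ 0 ∧ ∀ v, fiberLap o t m' φ' θ f v = (μ : ℂ) * f v) ↔
        (∃ g : V → ℂ, g ≠ 0 ∧ ∀ v, fiberLap o t m φ θ g v = (μ : ℂ) * g v) :=
  fiberLap_unitary_equivalence_general o t hconn m m' hfluxm φ φ' hfluxφ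
end
end

section
/- Let (V, E, o, t, inv) be a finite multigraph with ν = #V, let m : E → ℝ^d and α : E → ℝ be 1-forms, and Q : V → ℝ. For θ ∈ ℝ^d let H(θ) = Δ_{m,α}(θ) + Q (a Hermitian operator on ℂ^V) with eigenvalues λ_1(θ) ≤ … ≤ λ_ν(θ) counted with multiplicity. Let E⁰ = {e ∈ E : m(e) = 0}, let H⁰ be the Hermitian operator on ℂ^V given by (H⁰ f)(v) = Σ_{e ∈ E⁰ : o(e) = v} (f(v) − e^{iα(e)} f(t(e))) + Q(v) f(v), with eigenvalues μ_1 ≤ … ≤ μ_ν, and let κ₊^m = max_{v ∈ V} #{e ∈ E : o(e) = v and m(e) ≠ 0}. Then for every θ ∈ ℝ^d and every n ∈ {1,…,ν}: μ_n ≤ λ_n(θ) ≤ μ_n + 2κ₊^m. In particular each spectral band λ_n(ℝ^d) is contained in the interval [μ_n, μ_n + 2κ₊^m]. (Paper: Theorem 2.5(i) at the level of fiber operators.) -/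
open scoped Classical
open Finset

noncomputable section

/-!
Off the support of `m` the phases of `H(θ)` do not depend on `θ`, so `H(θ) = H⁰ + R(θ)`,
where `R(θ)` is the magnetic Laplacian of the subgraph of edges with `m e ≠ 0`. This subgraph
is closed under edge inversion, so AM-GM gives `|Re Σ e^{iβ} x̄(o e) x(t e)| ≤ Σ |x(o e)|²`
over its edges, hence `0 ≤ ⟨x, R(θ) x⟩ ≤ 2κ₊^m ‖x‖²`. The min-max principle turns this
sandwich of quadratic forms into the eigenvalue bounds: counting dimensions, some nonzero
vector lies in the span of the first `n + 1` eigenvectors of one operator and of the last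
`ν - n` eigenvectors of the other, and its Rayleigh quotient separates the two `n`-th
eigenvalues.
-/

section Spectral

variable {V ι : Type} [Fintype V]

lemma dotC_eq_star_dotProduct (f g : V → ℂ) : dotC f g = star f ⬝ᵥ g := rfl

lemma dotC_add_right (f g h : V → ℂ) : dotC f (g + h) = dotC f g + dotC f h :=
  dotProduct_add _ _ _

lemma dotC_smul_right (c : ℂ) (f g : V → ℂ) : dotC f (c • g) = c * dotC f g :=
  dotProduct_smul _ _ _

lemma dotC_smul_left (c : ℂ) (f g : V → ℂ) : dotC (c • f) g = star c * dotC f g := by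
  rw [dotC_eq_star_dotProduct, star_smul, smul_dotProduct, smul_eq_mul]; rfl

lemma dotC_sum_right (f : V → ℂ) (s : Finset ι) (g : ι → V → ℂ) :
    dotC f (∑ i ∈ s, g i) = ∑ i ∈ s, dotC f (g i) :=
  dotProduct_sum _ _ _

lemma dotC_sum_left (s : Finset ι) (f : ι → V → ℂ) (g : V → ℂ) :
    dotC (∑ i ∈ s, f i) g = ∑ i ∈ s, dotC (f i) g := by
  rw [dotC_eq_star_dotProduct, star_sum, sum_dotProduct]; rfl

def DotCOrthonormal [DecidableEq ι] (u : ι → V → ℂ) : Prop :=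
  ∀ i j, dotC (u i) (u j) = if i = j then 1 else 0

namespace DotCOrthonormal
variable [DecidableEq ι] {u : ι → V → ℂ}

lemma comp {ι' : Type} [DecidableEq ι'] (hu : DotCOrthonormal u) {f : ι' → ι}
    (hf : Function.Injective f) : DotCOrthonormal (u ∘ f) := fun i j => by
  simp [hu (f i) (f j), hf.eq_iff]

variable [Fintype ι]

lemma dotC_sum_smul_right (hu : DotCOrthonormal u) (i : ι) (c : ι → ℂ) :
    dotC (u i) (∑ j, c j • u j) = c i := by
  simp [dotC_sum_right, dotC_smul_right, hu i]

lemma dotC_sum_smul (hu : DotCOrthonormal u) (c d : ι → ℂ) :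
    dotC (∑ i, c i • u i) (∑ i, d i • u i) = ∑ i, star (c i) * d i := by
  simp [dotC_sum_left, dotC_smul_left, hu.dotC_sum_smul_right]

lemma linearIndependent (hu : DotCOrthonormal u) : LinearIndependent ℂ u := by
  rw [Fintype.linearIndependent_iff]
  intro c hc i
  rw [← hu.dotC_sum_smul_right i c, hc]
  simp [dotC]

lemma re_dotC_apply_sum_smul (hu : DotCOrthonormal u) (A : (V → ℂ) →ₗ[ℂ] (V → ℂ))
    {μ : ι → ℝ} (hA : ∀ i, A (u i) = (μ i : ℂ) • u i) (c : ι → ℂ) :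
    (dotC (∑ i, c i • u i) (A (∑ i, c i • u i))).re = ∑ i, μ i * ‖c i‖ ^ 2 := by
  simp only [map_sum, map_smul, hA, smul_smul, hu.dotC_sum_smul, Complex.re_sum]
  refine sum_congr rfl fun i _ => ?_
  rw [Complex.star_def, ← mul_assoc, Complex.conj_mul', mul_comm]
  norm_cast

lemma re_dotC_sum_smul_self (hu : DotCOrthonormal u) (c : ι → ℂ) :
    (dotC (∑ i, c i • u i) (∑ i, c i • u i)).re = ∑ i, ‖c i‖ ^ 2 := by
  simpa using hu.re_dotC_apply_sum_smul LinearMap.id (μ := 1) (by simp) c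

variable (A : (V → ℂ) →ₗ[ℂ] (V → ℂ)) {μ : ι → ℝ} {x : V → ℂ} {r : ℝ}

lemma le_re_dotC_apply_of_mem_span (hu : DotCOrthonormal u)
    (hA : ∀ i, A (u i) = (μ i : ℂ) • u i) (hr : ∀ i, r ≤ μ i)
    (hx : x ∈ Submodule.span ℂ (Set.range u)) : r * (dotC x x).re ≤ (dotC x (A x)).re := by
  obtain ⟨c, rfl⟩ := (Submodule.mem_span_range_iff_exists_fun ℂ).mp hx
  rw [hu.re_dotC_sum_smul_self, hu.re_dotC_apply_sum_smul A hA, mul_sum]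
  gcongr with i
  exact hr i

lemma re_dotC_apply_le_of_mem_span (hu : DotCOrthonormal u)
    (hA : ∀ i, A (u i) = (μ i : ℂ) • u i) (hr : ∀ i, μ i ≤ r)
    (hx : x ∈ Submodule.span ℂ (Set.range u)) : (dotC x (A x)).re ≤ r * (dotC x x).re := by
  obtain ⟨c, rfl⟩ := (Submodule.mem_span_range_iff_exists_fun ℂ).mp hx
  rw [hu.re_dotC_sum_smul_self, hu.re_dotC_apply_sum_smul A hA, mul_sum]
  gcongr with i
  exact hr i

end DotCOrthonormal

lemma re_dotC_self (f : V → ℂ) : (dotC f f).re = ∑ v, ‖f v‖ ^ 2 := by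
  simp only [dotC, Complex.re_sum, Complex.conj_mul', ← Complex.ofReal_pow, Complex.ofReal_re]

lemma re_dotC_self_pos {f : V → ℂ} (hf : f ≠ 0) : 0 < (dotC f f).re := by
  obtain ⟨v, hv⟩ := Function.ne_iff.mp hf
  rw [re_dotC_self]
  exact sum_pos' (fun _ _ => by positivity) ⟨v, mem_univ v, by positivity⟩

lemma exists_ne_zero_mem_span_Iic_mem_span_Ici {K M : Type*} [Field K] [AddCommGroup M]
    [Module K M] [FiniteDimensional K M] {N : ℕ} (hN : Module.finrank K M ≤ N)
    {u w : Fin N → M} (hu : LinearIndependent K u) (hw : LinearIndependent K w) (n : Fin N) :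
    ∃ x ≠ 0, x ∈ Submodule.span K (Set.range fun j : Iic n => w j) ∧
      x ∈ Submodule.span K (Set.range fun i : Ici n => u i) := by
  set S := Submodule.span K (Set.range fun j : Iic n => w j)
  set T := Submodule.span K (Set.range fun i : Ici n => u i)
  have hS : Module.finrank K S = n + 1 :=
    (finrank_span_eq_card (hw.comp _ Subtype.val_injective)).trans
      (by rw [Fintype.card_coe, Fin.card_Iic])
  have hT : Module.finrank K T = N - n :=
    (finrank_span_eq_card (hu.comp _ Subtype.val_injective)).trans
      (by rw [Fintype.card_coe, Fin.card_Ici])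
  have hST : S ⊓ T ≠ ⊥ := by
    intro h
    have hdim := Submodule.finrank_sup_add_finrank_inf_eq S T
    rw [h, finrank_bot, hS, hT] at hdim
    have := (S ⊔ T).finrank_le
    omega
  obtain ⟨x, hx, hx0⟩ := Submodule.exists_mem_ne_zero_of_ne_bot hST
  exact ⟨x, hx0, hx.1, hx.2⟩

variable {A B : (V → ℂ) →ₗ[ℂ] (V → ℂ)} {μ ν : Fin (Fintype.card V) → ℝ}

theorem IsEigList.le_of_re_dotC_le (hA : IsEigList A μ) (hB : IsEigList B ν)
    (hAB : ∀ x, (dotC x (A x)).re ≤ (dotC x (B x)).re) (n : Fin (Fintype.card V)) :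
    μ n ≤ ν n := by
  obtain ⟨hμ, u, hu : DotCOrthonormal u, hAu⟩ := hA
  obtain ⟨hν, w, hw : DotCOrthonormal w, hBw⟩ := hB
  obtain ⟨x, hx0, hxw, hxu⟩ := exists_ne_zero_mem_span_Iic_mem_span_Ici
    (Module.finrank_fintype_fun_eq_card ℂ).le hu.linearIndependent hw.linearIndependent n
  have lower : μ n * (dotC x x).re ≤ (dotC x (A x)).re :=
    (hu.comp Subtype.val_injective).le_re_dotC_apply_of_mem_span A (μ := μ ∘ Subtype.val)
      (fun i => hAu i.1) (fun i => hμ (mem_Ici.mp i.2)) hxu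
  have upper : (dotC x (B x)).re ≤ ν n * (dotC x x).re :=
    (hw.comp Subtype.val_injective).re_dotC_apply_le_of_mem_span B (μ := ν ∘ Subtype.val)
      (fun j => hBw j.1) (fun j => hν (mem_Iic.mp j.2)) hxw
  exact le_of_mul_le_mul_right ((lower.trans (hAB x)).trans upper) (re_dotC_self_pos hx0)

theorem IsEigList.add_smul_id (hA : IsEigList A μ) (c : ℝ) :
    IsEigList ⇑(A + (c : ℂ) • 1) (fun i => μ i + c) := by
  obtain ⟨hμ, u, hu, hAu⟩ := hA
  refine ⟨hμ.add_const c, u, hu, fun i => ?_⟩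
  funext v
  simp [hAu i, add_mul]

theorem IsEigList.le_and_le_add_of_add {R : (V → ℂ) →ₗ[ℂ] (V → ℂ)} (hA : IsEigList A μ)
    (hAR : IsEigList ⇑(A + R) ν) {c : ℝ} (hR₀ : ∀ x, 0 ≤ (dotC x (R x)).re)
    (hRc : ∀ x, (dotC x (R x)).re ≤ c * (dotC x x).re) (n : Fin (Fintype.card V)) :
    μ n ≤ ν n ∧ ν n ≤ μ n + c := by
  refine ⟨hA.le_of_re_dotC_le hAR (fun x => ?_) n,
    hAR.le_of_re_dotC_le (hA.add_smul_id c) (fun x => ?_) n⟩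
  · simpa [dotC_add_right] using hR₀ x
  · simp only [LinearMap.add_apply, LinearMap.smul_apply, Module.End.one_apply, dotC_add_right,
      dotC_smul_right, Complex.add_re, Complex.re_ofReal_mul]
    linarith [hRc x]

end Spectral

section MagneticLaplacian

variable {V E : Type} [Fintype E] (o t : E → V) (p : E → Prop) [DecidablePred p]

def subgraphMagLap (β : E → ℝ) : (V → ℂ) →ₗ[ℂ] (V → ℂ) where
  toFun f v := ∑ e ∈ univ.filter (fun e => o e = v ∧ p e),
    (f v - Complex.exp (Complex.I * (β e : ℂ)) * f (t e))
  map_add' f g := by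
    funext v
    simp only [Pi.add_apply, ← sum_add_distrib]
    exact sum_congr rfl fun _ _ => by ring
  map_smul' c f := by
    funext v
    simp only [Pi.smul_apply, smul_eq_mul, RingHom.id_apply, mul_sum]
    exact sum_congr rfl fun _ _ => by ring

lemma fiberLap_eq_add {d : ℕ} (m : E → Fin d → ℝ) (φ : E → ℝ) (θ : Fin d → ℝ) (f : V → ℂ) :
    fiberLap o t m φ θ f = subgraphMagLap o t (fun e => m e = 0) φ f +
      subgraphMagLap o t (fun e => m e ≠ 0) (fun e => φ e + ∑ i, m e i * θ i) f := by
  funext v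
  have hdeg : fiberLap o t m φ θ f v = ∑ e ∈ univ.filter (fun e => o e = v),
      (f v - Complex.exp (Complex.I * ((φ e + ∑ i, m e i * θ i : ℝ) : ℂ)) * f (t e)) := by
    rw [fiberLap, mdeg, sum_sub_distrib, sum_const, nsmul_eq_mul]
  have hflat : ∀ e, m e = 0 → φ e + ∑ i, m e i * θ i = φ e := fun e he => by simp [he]
  rw [hdeg, ← sum_filter_add_sum_filter_not _ (fun e => m e = 0), filter_filter, filter_filter]
  refine congrArg₂ (· + ·) (sum_congr rfl fun e he => ?_) rfl
  rw [hflat e (mem_filter.mp he).2.2]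

lemma filter_filter_origin_eq (v : V) :
    (univ.filter p).filter (o · = v) = univ.filter (fun e => o e = v ∧ p e) := by
  ext; simp [and_comm]

variable {p} {inv : E → E}

lemma sum_filter_comp_target_eq {M : Type} [AddCommMonoid M] (hinv : Function.Involutive inv)
    (hoi : ∀ e, o (inv e) = t e) (hp : ∀ e, p (inv e) ↔ p e) (g : V → M) :
    ∑ e ∈ univ.filter p, g (t e) = ∑ e ∈ univ.filter p, g (o e) :=
  sum_nbij' inv inv (fun e he => by simpa [hp] using he) (fun e he => by simpa [hp] using he)
    (fun e _ => hinv e) (fun e _ => hinv e) fun e _ => by rw [hoi]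

lemma abs_sum_re_phase_le (hinv : Function.Involutive inv) (hoi : ∀ e, o (inv e) = t e)
    (hp : ∀ e, p (inv e) ↔ p e) (β : E → ℝ) (x : V → ℂ) :
    |∑ e ∈ univ.filter p, (Complex.exp (Complex.I * β e) * (star (x (o e)) * x (t e))).re| ≤
      ∑ e ∈ univ.filter p, ‖x (o e)‖ ^ 2 :=
  calc _ ≤ ∑ e ∈ univ.filter p, ‖x (o e)‖ * ‖x (t e)‖ := by
        refine (abs_sum_le_sum_abs _ _).trans (sum_le_sum fun e _ => ?_)
        refine (Complex.abs_re_le_norm _).trans_eq ?_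
        rw [norm_mul, norm_mul, Complex.norm_exp_I_mul_ofReal, norm_star, one_mul]
    _ ≤ ∑ e ∈ univ.filter p, (‖x (o e)‖ ^ 2 + ‖x (t e)‖ ^ 2) / 2 :=
        sum_le_sum fun e _ => by nlinarith [sq_nonneg (‖x (o e)‖ - ‖x (t e)‖)]
    _ = ∑ e ∈ univ.filter p, ‖x (o e)‖ ^ 2 := by
        rw [← sum_div, sum_add_distrib,
          sum_filter_comp_target_eq o t hinv hoi hp (fun v => ‖x v‖ ^ 2)]
        ring

variable [Fintype V]

variable (p) in
def subgraphMaxDeg : ℕ :=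
  univ.sup fun v => (univ.filter fun e => o e = v ∧ p e).card

lemma re_dotC_subgraphMagLap (β : E → ℝ) (x : V → ℂ) :
    (dotC x (subgraphMagLap o t p β x)).re = ∑ e ∈ univ.filter p,
      (‖x (o e)‖ ^ 2 - (Complex.exp (Complex.I * β e) * (star (x (o e)) * x (t e))).re) := by
  have h : dotC x (subgraphMagLap o t p β x) = ∑ e ∈ univ.filter p,
      star (x (o e)) * (x (o e) - Complex.exp (Complex.I * β e) * x (t e)) := by
    rw [dotC, ← sum_fiberwise (univ.filter p) o]
    refine sum_congr rfl fun v _ => ?_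
    rw [filter_filter_origin_eq]
    simp only [subgraphMagLap, LinearMap.coe_mk, AddHom.coe_mk, mul_sum]
    exact sum_congr rfl fun e he => by rw [(mem_filter.mp he).2.1]; rfl
  rw [h, Complex.re_sum]
  refine sum_congr rfl fun e _ => ?_
  rw [mul_sub, Complex.sub_re, Complex.star_def, Complex.conj_mul', mul_left_comm]
  norm_cast

lemma sum_filter_comp_origin_le (g : V → ℝ) (hg : ∀ v, 0 ≤ g v) :
    ∑ e ∈ univ.filter p, g (o e) ≤ subgraphMaxDeg o p * ∑ v, g v := by
  rw [← sum_fiberwise (univ.filter p) o, mul_sum]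
  refine sum_le_sum fun v _ => ?_
  rw [sum_congr rfl fun e he => by rw [(mem_filter.mp he).2], sum_const, nsmul_eq_mul]
  refine mul_le_mul_of_nonneg_right ?_ (hg v)
  rw [filter_filter_origin_eq]
  exact_mod_cast le_sup (f := fun v => (univ.filter fun e => o e = v ∧ p e).card) (mem_univ v)

lemma re_dotC_subgraphMagLap_nonneg (hinv : Function.Involutive inv)
    (hoi : ∀ e, o (inv e) = t e) (hp : ∀ e, p (inv e) ↔ p e) (β : E → ℝ) (x : V → ℂ) :
    0 ≤ (dotC x (subgraphMagLap o t p β x)).re := by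
  rw [re_dotC_subgraphMagLap, sum_sub_distrib, sub_nonneg]
  exact (le_abs_self _).trans (abs_sum_re_phase_le o t hinv hoi hp β x)

lemma re_dotC_subgraphMagLap_le (hinv : Function.Involutive inv)
    (hoi : ∀ e, o (inv e) = t e) (hp : ∀ e, p (inv e) ↔ p e) (β : E → ℝ) (x : V → ℂ) :
    (dotC x (subgraphMagLap o t p β x)).re ≤ 2 * subgraphMaxDeg o p * (dotC x x).re := by
  rw [re_dotC_subgraphMagLap, sum_sub_distrib, re_dotC_self, mul_assoc, two_mul]
  have hphase := (abs_le.mp (abs_sum_re_phase_le o t hinv hoi hp β x)).1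
  have hdeg := sum_filter_comp_origin_le o (p := p) (fun v => ‖x v‖ ^ 2) fun v => by positivity
  linarith

end MagneticLaplacian

theorem fiber_band_localization_general
    {V E : Type} [Fintype V] [Fintype E] {d : ℕ}
    (o t : E → V) (inv : E → E)
    (hinv : ∀ e, inv (inv e) = e)
    (hoi : ∀ e, o (inv e) = t e)
    (m : E → Fin d → ℝ) (hm : ∀ e, m (inv e) = - m e)
    (α : E → ℝ)
    (Q : V → ℝ)
    (lam : (Fin d → ℝ) → Fin (Fintype.card V) → ℝ)
    (hlam : ∀ θ, IsEigList
      (fun f v => fiberLap o t m α θ f v + (Q v : ℂ) * f v) (lam θ))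
    (mu : Fin (Fintype.card V) → ℝ)
    (hmu : IsEigList
      (fun f v => (∑ e ∈ Finset.univ.filter (fun e => o e = v ∧ m e = 0),
          (f v - Complex.exp (Complex.I * (α e : ℂ)) * f (t e))) + (Q v : ℂ) * f v) mu) :
    ∀ (θ : Fin d → ℝ) (n : Fin (Fintype.card V)),
      (mu n ≤ lam θ n ∧
        lam θ n ≤ mu n +
          2 * (Nat.cast (Finset.univ.sup fun v : V =>
            (Finset.univ.filter fun e => o e = v ∧ m e ≠ 0).card) : ℝ)) ∧
      Set.range (fun θ' => lam θ' n) ⊆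
        Set.Icc (mu n)
          (mu n + 2 * (Nat.cast (Finset.univ.sup fun v : V =>
            (Finset.univ.filter fun e => o e = v ∧ m e ≠ 0).card) : ℝ)) := by
  have hsupp : ∀ e, m (inv e) ≠ 0 ↔ m e ≠ 0 := fun e => by rw [hm, neg_ne_zero]
  -- definitionally, `hmu : IsEigList ⇑H₀ mu`
  let H₀ := subgraphMagLap o t (fun e => m e = 0) α + LinearMap.mulLeft ℂ fun v => (Q v : ℂ)
  have band : ∀ θ n, mu n ≤ lam θ n ∧
      lam θ n ≤ mu n + 2 * (subgraphMaxDeg o fun e => m e ≠ 0 : ℝ) := by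
    intro θ n
    let R := subgraphMagLap o t (fun e => m e ≠ 0) fun e => α e + ∑ i, m e i * θ i
    have hθ : IsEigList ⇑(H₀ + R) (lam θ) := by
      convert hlam θ using 1
      funext f v
      simp only [fiberLap_eq_add, H₀, R, LinearMap.add_apply, Pi.add_apply,
        LinearMap.mulLeft_apply, Pi.mul_apply]
      ring
    exact IsEigList.le_and_le_add_of_add (A := H₀) hmu hθ
      (re_dotC_subgraphMagLap_nonneg o t hinv hoi hsupp _)
      (re_dotC_subgraphMagLap_le o t hinv hoi hsupp _) n
  exact fun θ n => ⟨band θ n, by rintro _ ⟨θ', rfl⟩; exact band θ' n⟩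

/-- Band localization: the `n`-th eigenvalue `λ_n(θ)` of the fiber Schrödinger
operator `H(θ) = Δ_{m,α}(θ) + Q` satisfies `μ_n ≤ λ_n(θ) ≤ μ_n + 2κ₊^m`, where
`μ_n` are the eigenvalues of the operator `H⁰` on the graph with the edges in
the support of `m` deleted, and `κ₊^m` is the maximal degree of the deleted
subgraph. In particular each band `λ_n(ℝ^d)` lies in `[μ_n, μ_n + 2κ₊^m]`. -/
theorem fiber_band_localization
    {V E : Type} [Fintype V] [Fintype E] [Nonempty V] {d : ℕ}
    (o t : E → V) (inv : E → E)
    (hfp : ∀ e, inv e ≠ e) (hinv : ∀ e, inv (inv e) = e)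
    (hoi : ∀ e, o (inv e) = t e) (hti : ∀ e, t (inv e) = o e)
    (m : E → Fin d → ℝ) (hm : ∀ e, m (inv e) = - m e)
    (α : E → ℝ) (hα : ∀ e, α (inv e) = - α e)
    (Q : V → ℝ)
    (lam : (Fin d → ℝ) → Fin (Fintype.card V) → ℝ)
    (hlam : ∀ θ, IsEigList
      (fun f v => fiberLap o t m α θ f v + (Q v : ℂ) * f v) (lam θ))
    (mu : Fin (Fintype.card V) → ℝ)
    (hmu : IsEigList
      (fun f v => (∑ e ∈ Finset.univ.filter (fun e => o e = v ∧ m e = 0),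
          (f v - Complex.exp (Complex.I * (α e : ℂ)) * f (t e))) + (Q v : ℂ) * f v) mu) :
    ∀ (θ : Fin d → ℝ) (n : Fin (Fintype.card V)),
      (mu n ≤ lam θ n ∧
        lam θ n ≤ mu n +
          2 * (Nat.cast (Finset.univ.sup fun v : V =>
            (Finset.univ.filter fun e => o e = v ∧ m e ≠ 0).card) : ℝ)) ∧
      Set.range (fun θ' => lam θ' n) ⊆
        Set.Icc (mu n)
          (mu n + 2 * (Nat.cast (Finset.univ.sup fun v : V =>
            (Finset.univ.filter fun e => o e = v ∧ m e ≠ 0).card) : ℝ)) :=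
  fiber_band_localization_general o t inv hinv hoi m hm α Q lam hlam mu hmu
end
end

section
/- Let (V, E, o, t, inv) be a finite multigraph with ν = #V, let m : E → ℝ^d and φ : E → ℝ be 1-forms, and Q : V → ℝ. For θ ∈ ℝ^d set H_φ(θ) = Δ_{m,φ}(θ) + Q and H_0(θ) = Δ_{m,0}(θ) + Q, with eigenvalues λ_{φ,1}(θ) ≤ … ≤ λ_{φ,ν}(θ) and λ_{0,1}(θ) ≤ … ≤ λ_{0,ν}(θ). Define the band edges λ_{φ,n}^+ = sup_θ λ_{φ,n}(θ), λ_{φ,n}^- = inf_θ λ_{φ,n}(θ), and similarly λ_{0,n}^±. Let X(θ) = Δ_{m,φ}(θ) − Δ_{m,0}(θ) (a Hermitian operator), Λ₁ = inf_θ (smallest eigenvalue of X(θ)) and Λ_ν = sup_θ (largest eigenvalue of X(θ)). Then for every n ∈ {1,…,ν}: Λ₁ ≤ λ_{φ,n}^+ − λ_{0,n}^+ ≤ Λ_ν and Λ₁ ≤ λ_{φ,n}^- − λ_{0,n}^- ≤ Λ_ν. (Paper: Theorem 2.6, inequality (emf1), at the level of fiber operators.) -/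
open scoped Classical
open Finset

noncomputable section

/-!
At every quasimomentum `θ` the two fiber Hamiltonians differ by the Hermitian matrix
`X(θ) = Δ_{m,φ}(θ) - Δ_{m,0}(θ)`, whose eigenvalues lie in `[Λ₁, Λ_ν]`, so `Λ₁ ≤ X(θ) ≤ Λ_ν` as
quadratic forms. Weyl's inequality turns this into `Λ₁ ≤ λ_{φ,n}(θ) - λ_{0,n}(θ) ≤ Λ_ν`: the span
of the eigenvectors of `H_φ(θ)` with index `≥ n` and that of the eigenvectors of `H_0(θ)` with
index `≤ n` have dimensions adding up to `ν + 1`, so they share a nonzero vector, on which the two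
Rayleigh quotients compare to `λ_{φ,n}(θ)` and `λ_{0,n}(θ)`. The band functions are bounded
uniformly in `θ`, and a pointwise two-sided bound on a difference survives taking suprema or
infima over `θ`.
-/

open Module Submodule RCLike Matrix
open scoped InnerProductSpace

theorem LinearIndependent.finrank_span_image_finset {K F ι : Type*} [DivisionRing K]
    [AddCommGroup F] [Module K F] {u : ι → F} (hu : LinearIndependent K u) (s : Finset ι) :
    finrank K (span K (u '' s)) = #s := by
  rw [Set.image_eq_range]
  exact (finrank_span_eq_card (hu.comp _ Subtype.val_injective)).trans (Fintype.card_coe s)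

theorem exists_ne_zero_mem_span_image_inf {K F ι : Type*} [DivisionRing K] [AddCommGroup F]
    [Module K F] [FiniteDimensional K F] {u v : ι → F} (hu : LinearIndependent K u)
    (hv : LinearIndependent K v) {s t : Finset ι} (hst : finrank K F < #s + #t) :
    ∃ x ∈ span K (u '' s) ⊓ span K (v '' t), x ≠ 0 := by
  rw [← Submodule.ne_bot_iff, ← Submodule.one_le_finrank_iff]
  have hsum := finrank_sup_add_finrank_inf_eq (span K (u '' s)) (span K (v '' t))
  have hsup := Submodule.finrank_le (span K (u '' s) ⊔ span K (v '' t))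
  rw [hu.finrank_span_image_finset, hv.finrank_span_image_finset] at hsum
  omega

section Rayleigh

variable {𝕜 F ι : Type*} [RCLike 𝕜] [NormedAddCommGroup F] [InnerProductSpace 𝕜 F]
  {T : F →ₗ[𝕜] F} {u : ι → F} {lam : ι → ℝ} {s : Finset ι}

theorem Orthonormal.norm_sum_smul_sq (hu : Orthonormal 𝕜 u) (c : ι → 𝕜) :
    ‖∑ i ∈ s, c i • u i‖ ^ 2 = ∑ i ∈ s, ‖c i‖ ^ 2 := by
  rw [← inner_self_eq_norm_sq (𝕜 := 𝕜), hu.inner_sum, map_sum]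
  refine sum_congr rfl fun i _ => ?_
  rw [RCLike.conj_mul, ← ofReal_pow, ofReal_re]

theorem Orthonormal.re_inner_sum_smul_map_eq (hu : Orthonormal 𝕜 u)
    (hT : ∀ i ∈ s, T (u i) = (lam i : 𝕜) • u i) (c : ι → 𝕜) :
    re ⟪∑ i ∈ s, c i • u i, T (∑ i ∈ s, c i • u i)⟫_𝕜 = ∑ i ∈ s, lam i * ‖c i‖ ^ 2 := by
  have hTsum : T (∑ i ∈ s, c i • u i) = ∑ i ∈ s, ((lam i : 𝕜) * c i) • u i := by
    rw [map_sum]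
    refine sum_congr rfl fun i hi => ?_
    rw [map_smul, hT i hi, smul_smul, mul_comm]
  rw [hTsum, hu.inner_sum, map_sum]
  refine sum_congr rfl fun i _ => ?_
  rw [mul_left_comm, RCLike.conj_mul, ← ofReal_pow, ← ofReal_mul, ofReal_re]

theorem Orthonormal.le_re_inner_map_self_of_mem_span (hu : Orthonormal 𝕜 u)
    (hT : ∀ i ∈ s, T (u i) = (lam i : 𝕜) • u i) {a : ℝ} (ha : ∀ i ∈ s, a ≤ lam i) {x : F}
    (hx : x ∈ span 𝕜 (u '' s)) : a * ‖x‖ ^ 2 ≤ re ⟪x, T x⟫_𝕜 := by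
  obtain ⟨c, rfl⟩ := (mem_span_image_finset_iff_exists_fun' 𝕜).mp hx
  rw [hu.re_inner_sum_smul_map_eq hT, hu.norm_sum_smul_sq, mul_sum]
  exact sum_le_sum fun i hi => mul_le_mul_of_nonneg_right (ha i hi) (sq_nonneg _)

theorem Orthonormal.re_inner_map_self_le_of_mem_span (hu : Orthonormal 𝕜 u)
    (hT : ∀ i ∈ s, T (u i) = (lam i : 𝕜) • u i) {b : ℝ} (hb : ∀ i ∈ s, lam i ≤ b) {x : F}
    (hx : x ∈ span 𝕜 (u '' s)) : re ⟪x, T x⟫_𝕜 ≤ b * ‖x‖ ^ 2 := by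
  obtain ⟨c, rfl⟩ := (mem_span_image_finset_iff_exists_fun' 𝕜).mp hx
  rw [hu.re_inner_sum_smul_map_eq hT, hu.norm_sum_smul_sq, mul_sum]
  exact sum_le_sum fun i hi => mul_le_mul_of_nonneg_right (hb i hi) (sq_nonneg _)

end Rayleigh

theorem eigenvalue_le_add_of_re_inner_sub_le {𝕜 F : Type*} [RCLike 𝕜] [NormedAddCommGroup F]
    [InnerProductSpace 𝕜 F] [FiniteDimensional 𝕜 F] {N : ℕ} (hN : finrank 𝕜 F = N)
    {T₁ T₀ : F →ₗ[𝕜] F} {u₁ u₀ : Fin N → F} {lam₁ lam₀ : Fin N → ℝ}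
    (hu₁ : Orthonormal 𝕜 u₁) (hu₀ : Orthonormal 𝕜 u₀)
    (hT₁ : ∀ i, T₁ (u₁ i) = (lam₁ i : 𝕜) • u₁ i) (hT₀ : ∀ i, T₀ (u₀ i) = (lam₀ i : 𝕜) • u₀ i)
    (hmono₁ : Monotone lam₁) (hmono₀ : Monotone lam₀)
    {M : ℝ} (hM : ∀ x, re ⟪x, (T₁ - T₀) x⟫_𝕜 ≤ M * ‖x‖ ^ 2) (n : Fin N) :
    lam₁ n ≤ lam₀ n + M := by
  have hcard : finrank 𝕜 F < #(Ici n) + #(Iic n) := by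
    rw [Fin.card_Ici, Fin.card_Iic]
    omega
  obtain ⟨x, ⟨hx₁, hx₀⟩, hx⟩ :=
    exists_ne_zero_mem_span_image_inf hu₁.linearIndependent hu₀.linearIndependent hcard
  have h₁ : lam₁ n * ‖x‖ ^ 2 ≤ re ⟪x, T₁ x⟫_𝕜 :=
    hu₁.le_re_inner_map_self_of_mem_span (fun i _ => hT₁ i)
      (fun i hi => hmono₁ (mem_Ici.mp hi)) hx₁
  have h₀ : re ⟪x, T₀ x⟫_𝕜 ≤ lam₀ n * ‖x‖ ^ 2 :=
    hu₀.re_inner_map_self_le_of_mem_span (fun i _ => hT₀ i)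
      (fun i hi => hmono₀ (mem_Iic.mp hi)) hx₀
  have hMx := hM x
  rw [LinearMap.sub_apply, inner_sub_right, map_sub] at hMx
  refine le_of_mul_le_mul_right ?_ (pow_pos (norm_pos_iff.mpr hx) 2)
  linarith

theorem OrthonormalBasis.mem_span_image_univ {𝕜 F ι : Type*} [Fintype ι] [RCLike 𝕜]
    [NormedAddCommGroup F] [InnerProductSpace 𝕜 F] (b : OrthonormalBasis ι 𝕜 F) (x : F) :
    x ∈ span 𝕜 (b '' (univ : Finset ι)) := by
  rw [coe_univ, Set.image_univ, ← b.coe_toBasis]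
  exact b.toBasis.mem_span x

section MatrixSpectrum

variable {V : Type} [Fintype V]

theorem abs_le_of_mulVec_eq_smul {A : Matrix V V ℂ} {C : ℝ} (hA : ∀ f, ‖A *ᵥ f‖ ≤ C * ‖f‖)
    {μ : ℝ} {f : V → ℂ} (hf : f ≠ 0) (h : A *ᵥ f = μ • f) : |μ| ≤ C := by
  have hAf := hA f
  rw [h, norm_smul, Real.norm_eq_abs] at hAf
  exact le_of_mul_le_mul_right hAf (norm_pos_iff.mpr hf)

theorem norm_diagonal_mulVec_le (d f : V → ℂ) : ‖diagonal d *ᵥ f‖ ≤ ‖d‖ * ‖f‖ := by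
  rw [show diagonal d *ᵥ f = d * f from funext fun v => mulVec_diagonal d f v]
  exact norm_mul_le d f

theorem Matrix.IsHermitian.toEuclideanLin_eigenvectorBasis {A : Matrix V V ℂ}
    (hA : A.IsHermitian) (i : V) :
    toEuclideanLin A (hA.eigenvectorBasis i) = (hA.eigenvalues i : ℂ) • hA.eigenvectorBasis i := by
  ext v
  simpa [Complex.real_smul] using congrFun (hA.mulVec_eigenvectorBasis i) v

theorem Matrix.IsHermitian.le_re_inner_toEuclideanLin {A : Matrix V V ℂ} (hA : A.IsHermitian)
    {a : ℝ} (ha : ∀ i, a ≤ hA.eigenvalues i) (x : EuclideanSpace ℂ V) :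
    a * ‖x‖ ^ 2 ≤ re ⟪x, toEuclideanLin A x⟫_ℂ :=
  hA.eigenvectorBasis.orthonormal.le_re_inner_map_self_of_mem_span
    (fun i _ => hA.toEuclideanLin_eigenvectorBasis i) (fun i _ => ha i)
    (hA.eigenvectorBasis.mem_span_image_univ x)

theorem Matrix.IsHermitian.re_inner_toEuclideanLin_le {A : Matrix V V ℂ} (hA : A.IsHermitian)
    {b : ℝ} (hb : ∀ i, hA.eigenvalues i ≤ b) (x : EuclideanSpace ℂ V) :
    re ⟪x, toEuclideanLin A x⟫_ℂ ≤ b * ‖x‖ ^ 2 :=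
  hA.eigenvectorBasis.orthonormal.re_inner_map_self_le_of_mem_span
    (fun i _ => hA.toEuclideanLin_eigenvectorBasis i) (fun i _ => hb i)
    (hA.eigenvectorBasis.mem_span_image_univ x)

theorem dotC_eq_inner (f g : V → ℂ) : dotC f g = ⟪WithLp.toLp 2 f, WithLp.toLp 2 g⟫_ℂ := by
  simp [dotC, PiLp.inner_apply, mul_comm]

theorem IsEigList.exists_orthonormal {A : Matrix V V ℂ} {lam : Fin (Fintype.card V) → ℝ}
    (h : IsEigList (fun f => A *ᵥ f) lam) :
    ∃ u : Fin (Fintype.card V) → EuclideanSpace ℂ V,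
      Orthonormal ℂ u ∧ ∀ i, toEuclideanLin A (u i) = (lam i : ℂ) • u i := by
  obtain ⟨-, u, hON, heig⟩ := h
  refine ⟨fun i => WithLp.toLp 2 (u i), orthonormal_iff_ite.mpr fun i j => ?_, fun i => ?_⟩
  · rw [← dotC_eq_inner, hON]
  · ext v
    simpa using congrFun (heig i) v

theorem IsEigList.le_add_of_re_inner_sub_le {A B : Matrix V V ℂ}
    {lamA lamB : Fin (Fintype.card V) → ℝ} (hA : IsEigList (fun f => A *ᵥ f) lamA)
    (hB : IsEigList (fun f => B *ᵥ f) lamB) {M : ℝ}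
    (hM : ∀ x, re ⟪x, toEuclideanLin (A - B) x⟫_ℂ ≤ M * ‖x‖ ^ 2)
    (n : Fin (Fintype.card V)) : lamA n ≤ lamB n + M := by
  obtain ⟨uA, huA, hTA⟩ := hA.exists_orthonormal
  obtain ⟨uB, huB, hTB⟩ := hB.exists_orthonormal
  rw [map_sub] at hM
  exact eigenvalue_le_add_of_re_inner_sub_le finrank_euclideanSpace huA huB hTA hTB hA.1 hB.1 hM n

theorem IsEigList.abs_le {A : Matrix V V ℂ} {lam : Fin (Fintype.card V) → ℝ}
    (h : IsEigList (fun f => A *ᵥ f) lam) {C : ℝ} (hA : ∀ f, ‖A *ᵥ f‖ ≤ C * ‖f‖)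
    (n : Fin (Fintype.card V)) : |lam n| ≤ C := by
  obtain ⟨-, u, hON, heig⟩ := h
  refine abs_le_of_mulVec_eq_smul hA (fun hu => ?_) ((heig n).trans ?_)
  · simpa [dotC, hu] using hON n n
  · ext v
    simp [Complex.real_smul]

end MatrixSpectrum

section PhaseMatrix

variable {V E : Type} [Fintype E]

def phaseMatrix (o t : E → V) (α : E → ℝ) : Matrix V V ℂ :=
  Matrix.of fun v w =>
    ∑ e ∈ univ.filter (fun e => o e = v ∧ t e = w), Complex.exp (Complex.I * α e)

theorem phaseMatrix_mulVec_apply [Fintype V] (o t : E → V) (α : E → ℝ) (f : V → ℂ) (v : V) :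
    (phaseMatrix o t α *ᵥ f) v
      = ∑ e ∈ univ.filter (fun e => o e = v), Complex.exp (Complex.I * α e) * f (t e) := by
  simp only [mulVec, dotProduct, phaseMatrix, of_apply, sum_mul]
  rw [← sum_fiberwise (univ.filter fun e => o e = v) t]
  refine sum_congr rfl fun w _ => ?_
  rw [filter_filter]
  exact sum_congr rfl fun e he => by rw [(mem_filter.mp he).2.2]

theorem phaseMatrix_isHermitian {o t : E → V} {inv : E → E} (hinv : ∀ e, inv (inv e) = e)
    (hoi : ∀ e, o (inv e) = t e) (hti : ∀ e, t (inv e) = o e) {α : E → ℝ}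
    (hα : ∀ e, α (inv e) = -α e) : (phaseMatrix o t α).IsHermitian := by
  have hmaps : ∀ a b, ∀ e ∈ univ.filter (fun e => o e = a ∧ t e = b),
      inv e ∈ univ.filter (fun e => o e = b ∧ t e = a) := by
    intro a b e he
    simp only [mem_filter, mem_univ, true_and] at he ⊢
    exact ⟨(hoi e).trans he.2, (hti e).trans he.1⟩
  ext v w
  simp only [conjTranspose_apply, phaseMatrix, of_apply, star_sum]
  refine sum_nbij' inv inv (hmaps w v) (hmaps v w) (fun e _ => hinv e) (fun e _ => hinv e)
    fun e _ => ?_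
  rw [hα, Complex.star_def, ← Complex.exp_conj]
  simp

theorem norm_phaseMatrix_mulVec_le [Fintype V] (o t : E → V) (α : E → ℝ) (f : V → ℂ) :
    ‖phaseMatrix o t α *ᵥ f‖ ≤ Fintype.card E * ‖f‖ := by
  refine (pi_norm_le_iff_of_nonneg (by positivity)).mpr fun v => ?_
  rw [phaseMatrix_mulVec_apply]
  calc ‖∑ e ∈ univ.filter (fun e => o e = v), Complex.exp (Complex.I * α e) * f (t e)‖
      ≤ ∑ e ∈ univ.filter (fun e => o e = v), ‖f‖ := by
        refine norm_sum_le_of_le _ fun e _ => ?_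
        rw [norm_mul, Complex.norm_exp_I_mul_ofReal, one_mul]
        exact norm_le_pi_norm f (t e)
    _ ≤ Fintype.card E * ‖f‖ := by
        rw [sum_const, nsmul_eq_mul]
        gcongr
        exact_mod_cast card_filter_le _ _

end PhaseMatrix

section FiberPhase

variable {E : Type} {d : ℕ}

def fiberPhase (m : E → Fin d → ℝ) (φ : E → ℝ) (θ : Fin d → ℝ) (e : E) : ℝ :=
  φ e + ∑ i, m e i * θ i

theorem fiberPhase_inv {inv : E → E} {m : E → Fin d → ℝ} (hm : ∀ e, m (inv e) = -m e)
    {φ : E → ℝ} (hφ : ∀ e, φ (inv e) = -φ e) (θ : Fin d → ℝ) (e : E) :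
    fiberPhase m φ θ (inv e) = -fiberPhase m φ θ e := by
  simp only [fiberPhase, hm, hφ, Pi.neg_apply, neg_mul, sum_neg_distrib, neg_add]

end FiberPhase

section Fiber

variable {V E : Type} [Fintype E] {d : ℕ}

def fiberLapMatrix (o t : E → V) (m : E → Fin d → ℝ) (φ : E → ℝ) (θ : Fin d → ℝ) :
    Matrix V V ℂ :=
  diagonal (fun v => (mdeg o v : ℂ)) - phaseMatrix o t (fiberPhase m φ θ)

theorem fiberLapMatrix_mulVec_apply [Fintype V] (o t : E → V) (m : E → Fin d → ℝ) (φ : E → ℝ)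
    (θ : Fin d → ℝ) (f : V → ℂ) (v : V) :
    (fiberLapMatrix o t m φ θ *ᵥ f) v = fiberLap o t m φ θ f v := by
  rw [fiberLapMatrix, sub_mulVec, Pi.sub_apply, mulVec_diagonal, phaseMatrix_mulVec_apply]
  rfl

theorem fiberLapMatrix_isHermitian {o t : E → V} {inv : E → E} (hinv : ∀ e, inv (inv e) = e)
    (hoi : ∀ e, o (inv e) = t e) (hti : ∀ e, t (inv e) = o e)
    {m : E → Fin d → ℝ} (hm : ∀ e, m (inv e) = -m e) {φ : E → ℝ} (hφ : ∀ e, φ (inv e) = -φ e)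
    (θ : Fin d → ℝ) : (fiberLapMatrix o t m φ θ).IsHermitian :=
  (isHermitian_diagonal_of_self_adjoint _ (by ext; simp)).sub
    (phaseMatrix_isHermitian hinv hoi hti (fiberPhase_inv hm hφ θ))

theorem norm_fiberLapMatrix_mulVec_le [Fintype V] (o t : E → V) (m : E → Fin d → ℝ)
    (φ : E → ℝ) (θ : Fin d → ℝ) (f : V → ℂ) :
    ‖fiberLapMatrix o t m φ θ *ᵥ f‖ ≤ 2 * Fintype.card E * ‖f‖ := by
  have hdeg : ‖fun v => (mdeg o v : ℂ)‖ ≤ Fintype.card E :=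
    (pi_norm_le_iff_of_nonneg (by positivity)).mpr fun v => by
      rw [Complex.norm_natCast]
      exact_mod_cast card_filter_le _ _
  rw [fiberLapMatrix, sub_mulVec]
  calc _ ≤ ‖diagonal (fun v => (mdeg o v : ℂ)) *ᵥ f‖
          + ‖phaseMatrix o t (fiberPhase m φ θ) *ᵥ f‖ := norm_sub_le _ _
    _ ≤ Fintype.card E * ‖f‖ + Fintype.card E * ‖f‖ := by
        gcongr
        · exact (norm_diagonal_mulVec_le _ f).trans (by gcongr)
        · exact norm_phaseMatrix_mulVec_le o t _ f
    _ = 2 * Fintype.card E * ‖f‖ := by ring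

def fiberHamiltonian (o t : E → V) (m : E → Fin d → ℝ) (φ : E → ℝ) (θ : Fin d → ℝ)
    (Q : V → ℝ) : Matrix V V ℂ :=
  fiberLapMatrix o t m φ θ + diagonal (fun v => (Q v : ℂ))

theorem fiberHamiltonian_mulVec [Fintype V] (o t : E → V) (m : E → Fin d → ℝ) (φ : E → ℝ)
    (θ : Fin d → ℝ) (Q : V → ℝ) :
    (fun f => fiberHamiltonian o t m φ θ Q *ᵥ f)
      = fun f v => fiberLap o t m φ θ f v + (Q v : ℂ) * f v := by
  funext f v
  rw [fiberHamiltonian, add_mulVec, Pi.add_apply, fiberLapMatrix_mulVec_apply, mulVec_diagonal]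

theorem fiberHamiltonian_sub_fiberHamiltonian (o t : E → V) (m : E → Fin d → ℝ)
    (φ ψ : E → ℝ) (θ : Fin d → ℝ) (Q : V → ℝ) :
    fiberHamiltonian o t m φ θ Q - fiberHamiltonian o t m ψ θ Q
      = fiberLapMatrix o t m φ θ - fiberLapMatrix o t m ψ θ :=
  add_sub_add_right_eq_sub _ _ _

theorem norm_fiberHamiltonian_mulVec_le [Fintype V] (o t : E → V) (m : E → Fin d → ℝ)
    (φ : E → ℝ) (θ : Fin d → ℝ) (Q : V → ℝ) (f : V → ℂ) :
    ‖fiberHamiltonian o t m φ θ Q *ᵥ f‖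
      ≤ (2 * Fintype.card E + ‖fun v => (Q v : ℂ)‖) * ‖f‖ := by
  rw [fiberHamiltonian, add_mulVec, add_mul]
  exact (norm_add_le _ _).trans
    (add_le_add (norm_fiberLapMatrix_mulVec_le o t m φ θ f) (norm_diagonal_mulVec_le _ f))

theorem isBounded_range_fiberEigenvalue [Fintype V] (o t : E → V) (m : E → Fin d → ℝ)
    (φ : E → ℝ) (Q : V → ℝ) {lam : (Fin d → ℝ) → Fin (Fintype.card V) → ℝ}
    (hlam : ∀ θ, IsEigList (fun f => fiberHamiltonian o t m φ θ Q *ᵥ f) (lam θ))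
    (n : Fin (Fintype.card V)) : Bornology.IsBounded (Set.range fun θ => lam θ n) :=
  isBounded_iff_forall_norm_le.mpr ⟨_, Set.forall_mem_range.mpr fun θ =>
    (hlam θ).abs_le (norm_fiberHamiltonian_mulVec_le o t m φ θ Q) n⟩

end Fiber

section ShiftSpectrum

variable {V E : Type} [Fintype V] [Fintype E] {d : ℕ}

/-- The eigenvalues of `X(θ) = Δ_{m,φ}(θ) - Δ_{m,0}(θ)` over all `θ`; `Λ₁` and `Λ_ν` are its
infimum and supremum. -/
def magneticShiftSpectrum (o t : E → V) (m : E → Fin d → ℝ) (φ : E → ℝ) : Set ℝ :=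
  {μ | ∃ (θ : Fin d → ℝ) (f : V → ℂ), f ≠ 0 ∧
    ∀ v, fiberLap o t m φ θ f v - fiberLap o t m (fun _ => 0) θ f v = (μ : ℂ) * f v}

theorem mem_magneticShiftSpectrum_iff {o t : E → V} {m : E → Fin d → ℝ} {φ : E → ℝ} {μ : ℝ} :
    μ ∈ magneticShiftSpectrum o t m φ ↔ ∃ (θ : Fin d → ℝ) (f : V → ℂ), f ≠ 0 ∧
      (fiberLapMatrix o t m φ θ - fiberLapMatrix o t m (fun _ => 0) θ) *ᵥ f = μ • f := by
  simp only [magneticShiftSpectrum, Set.mem_ofPred_eq, funext_iff, sub_mulVec, Pi.sub_apply,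
    fiberLapMatrix_mulVec_apply, Pi.smul_apply, Complex.real_smul]

theorem isBounded_magneticShiftSpectrum (o t : E → V) (m : E → Fin d → ℝ) (φ : E → ℝ) :
    Bornology.IsBounded (magneticShiftSpectrum o t m φ) := by
  refine isBounded_iff_forall_norm_le.mpr ⟨4 * Fintype.card E, fun μ hμ => ?_⟩
  obtain ⟨θ, f, hf, hμf⟩ := mem_magneticShiftSpectrum_iff.mp hμ
  refine abs_le_of_mulVec_eq_smul (fun g => ?_) hf hμf
  rw [sub_mulVec]
  linarith [norm_sub_le (fiberLapMatrix o t m φ θ *ᵥ g) (fiberLapMatrix o t m (fun _ => 0) θ *ᵥ g),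
    norm_fiberLapMatrix_mulVec_le o t m φ θ g, norm_fiberLapMatrix_mulVec_le o t m (fun _ => 0) θ g]

theorem Matrix.IsHermitian.eigenvalues_mem_magneticShiftSpectrum {o t : E → V}
    {m : E → Fin d → ℝ} {φ : E → ℝ} {θ : Fin d → ℝ}
    (hX : (fiberLapMatrix o t m φ θ - fiberLapMatrix o t m (fun _ => 0) θ).IsHermitian) (i : V) :
    hX.eigenvalues i ∈ magneticShiftSpectrum o t m φ :=
  mem_magneticShiftSpectrum_iff.mpr ⟨θ, hX.eigenvectorBasis i,
    fun h => hX.eigenvectorBasis.orthonormal.ne_zero i (by simpa using h),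
    hX.mulVec_eigenvectorBasis i⟩

theorem fiberEigenvalue_sub_mem_Icc {o t : E → V} {inv : E → E} (hinv : ∀ e, inv (inv e) = e)
    (hoi : ∀ e, o (inv e) = t e) (hti : ∀ e, t (inv e) = o e)
    {m : E → Fin d → ℝ} (hm : ∀ e, m (inv e) = -m e) {φ : E → ℝ} (hφ : ∀ e, φ (inv e) = -φ e)
    {θ : Fin d → ℝ} {Q : V → ℝ} {lamφ lam0 : Fin (Fintype.card V) → ℝ}
    (hlamφ : IsEigList (fun f => fiberHamiltonian o t m φ θ Q *ᵥ f) lamφ)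
    (hlam0 : IsEigList (fun f => fiberHamiltonian o t m (fun _ => 0) θ Q *ᵥ f) lam0)
    (n : Fin (Fintype.card V)) :
    lamφ n - lam0 n
      ∈ Set.Icc (sInf (magneticShiftSpectrum o t m φ)) (sSup (magneticShiftSpectrum o t m φ)) := by
  have hX := (fiberLapMatrix_isHermitian hinv hoi hti hm hφ θ).sub
    (fiberLapMatrix_isHermitian hinv hoi hti hm (φ := fun _ => 0) (fun _ => neg_zero.symm) θ)
  have hS := isBounded_magneticShiftSpectrum o t m φ
  have hmem := hX.eigenvalues_mem_magneticShiftSpectrum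
  constructor
  · have hlow := hlam0.le_add_of_re_inner_sub_le hlamφ (M := -sInf (magneticShiftSpectrum o t m φ))
      (fun x => by
        rw [← neg_sub, fiberHamiltonian_sub_fiberHamiltonian, map_neg, LinearMap.neg_apply,
          inner_neg_right, map_neg, neg_mul, neg_le_neg_iff]
        exact hX.le_re_inner_toEuclideanLin (fun i => csInf_le hS.bddBelow (hmem i)) x) n
    linarith
  · have hup := hlamφ.le_add_of_re_inner_sub_le hlam0 (M := sSup (magneticShiftSpectrum o t m φ))
      (fun x => by
        rw [fiberHamiltonian_sub_fiberHamiltonian]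
        exact hX.re_inner_toEuclideanLin_le (fun i => le_csSup hS.bddAbove (hmem i)) x) n
    linarith

end ShiftSpectrum

section BandEdges

variable {ι : Type*} [Nonempty ι] {f g : ι → ℝ} {a b : ℝ}

theorem ciSup_sub_ciSup_mem_Icc (hf : BddAbove (Set.range f)) (hg : BddAbove (Set.range g))
    (h : ∀ i, f i - g i ∈ Set.Icc a b) : (⨆ i, f i) - ⨆ i, g i ∈ Set.Icc a b := by
  constructor
  · have : ⨆ i, g i ≤ (⨆ i, f i) - a :=
      ciSup_le fun i => by linarith [(h i).1, le_ciSup hf i]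
    linarith
  · have : ⨆ i, f i ≤ (⨆ i, g i) + b :=
      ciSup_le fun i => by linarith [(h i).2, le_ciSup hg i]
    linarith

theorem ciInf_sub_ciInf_mem_Icc (hf : BddBelow (Set.range f)) (hg : BddBelow (Set.range g))
    (h : ∀ i, f i - g i ∈ Set.Icc a b) : (⨅ i, f i) - ⨅ i, g i ∈ Set.Icc a b := by
  constructor
  · have : (⨅ i, g i) + a ≤ ⨅ i, f i :=
      le_ciInf fun i => by linarith [(h i).1, ciInf_le hg i]
    linarith
  · have : (⨅ i, f i) - b ≤ ⨅ i, g i :=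
      le_ciInf fun i => by linarith [(h i).2, ciInf_le hf i]
    linarith

end BandEdges

theorem fiber_band_edge_variation_general
    {V E : Type} [Fintype V] [Fintype E] {d : ℕ}
    (o t : E → V) (inv : E → E)
    (hinv : ∀ e, inv (inv e) = e)
    (hoi : ∀ e, o (inv e) = t e) (hti : ∀ e, t (inv e) = o e)
    (m : E → Fin d → ℝ) (hm : ∀ e, m (inv e) = - m e)
    (φ : E → ℝ) (hφ : ∀ e, φ (inv e) = - φ e)
    (Q : V → ℝ)
    (lamφ lam0 : (Fin d → ℝ) → Fin (Fintype.card V) → ℝ)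
    (hlamφ : ∀ θ, IsEigList
      (fun f v => fiberLap o t m φ θ f v + (Q v : ℂ) * f v) (lamφ θ))
    (hlam0 : ∀ θ, IsEigList
      (fun f v => fiberLap o t m (fun _ => 0) θ f v + (Q v : ℂ) * f v) (lam0 θ))
    (Λ₁ Λν : ℝ)
    (hΛ₁ : Λ₁ = sInf {μ : ℝ | ∃ (θ : Fin d → ℝ) (f : V → ℂ), f ≠ 0 ∧
      ∀ v, fiberLap o t m φ θ f v - fiberLap o t m (fun _ => 0) θ f v = (μ : ℂ) * f v})
    (hΛν : Λν = sSup {μ : ℝ | ∃ (θ : Fin d → ℝ) (f : V → ℂ), f ≠ 0 ∧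
      ∀ v, fiberLap o t m φ θ f v - fiberLap o t m (fun _ => 0) θ f v = (μ : ℂ) * f v}) :
    ∀ n : Fin (Fintype.card V),
      (Λ₁ ≤ sSup (Set.range fun θ => lamφ θ n) - sSup (Set.range fun θ => lam0 θ n) ∧
        sSup (Set.range fun θ => lamφ θ n) - sSup (Set.range fun θ => lam0 θ n) ≤ Λν) ∧
      (Λ₁ ≤ sInf (Set.range fun θ => lamφ θ n) - sInf (Set.range fun θ => lam0 θ n) ∧
        sInf (Set.range fun θ => lamφ θ n) - sInf (Set.range fun θ => lam0 θ n) ≤ Λν) := by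
  intro n
  simp only [← fiberHamiltonian_mulVec] at hlamφ hlam0
  subst hΛ₁ hΛν
  have hshift θ := fiberEigenvalue_sub_mem_Icc hinv hoi hti hm hφ (hlamφ θ) (hlam0 θ) n
  have hbddφ := isBounded_range_fiberEigenvalue o t m φ Q hlamφ n
  have hbdd0 := isBounded_range_fiberEigenvalue o t m (fun _ => 0) Q hlam0 n
  exact ⟨ciSup_sub_ciSup_mem_Icc hbddφ.bddAbove hbdd0.bddAbove hshift,
    ciInf_sub_ciInf_mem_Icc hbddφ.bddBelow hbdd0.bddBelow hshift⟩

/-- Variation of the band edges under a perturbation by a magnetic field: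
`Λ₁ ≤ λ_{φ,n}^± − λ_{0,n}^± ≤ Λ_ν`, where `Λ₁` (resp. `Λ_ν`) is the infimum of
the smallest (resp. supremum of the largest) eigenvalue of
`X(θ) = Δ_{m,φ}(θ) − Δ_{m,0}(θ)` over `θ`. -/
theorem fiber_band_edge_variation
    {V E : Type} [Fintype V] [Fintype E] [Nonempty V] {d : ℕ}
    (o t : E → V) (inv : E → E)
    (hfp : ∀ e, inv e ≠ e) (hinv : ∀ e, inv (inv e) = e)
    (hoi : ∀ e, o (inv e) = t e) (hti : ∀ e, t (inv e) = o e)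
    (m : E → Fin d → ℝ) (hm : ∀ e, m (inv e) = - m e)
    (φ : E → ℝ) (hφ : ∀ e, φ (inv e) = - φ e)
    (Q : V → ℝ)
    (lamφ lam0 : (Fin d → ℝ) → Fin (Fintype.card V) → ℝ)
    (hlamφ : ∀ θ, IsEigList
      (fun f v => fiberLap o t m φ θ f v + (Q v : ℂ) * f v) (lamφ θ))
    (hlam0 : ∀ θ, IsEigList
      (fun f v => fiberLap o t m (fun _ => 0) θ f v + (Q v : ℂ) * f v) (lam0 θ))
    (Λ₁ Λν : ℝ)
    (hΛ₁ : Λ₁ = sInf {μ : ℝ | ∃ (θ : Fin d → ℝ) (f : V → ℂ), f ≠ 0 ∧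
      ∀ v, fiberLap o t m φ θ f v - fiberLap o t m (fun _ => 0) θ f v = (μ : ℂ) * f v})
    (hΛν : Λν = sSup {μ : ℝ | ∃ (θ : Fin d → ℝ) (f : V → ℂ), f ≠ 0 ∧
      ∀ v, fiberLap o t m φ θ f v - fiberLap o t m (fun _ => 0) θ f v = (μ : ℂ) * f v}) :
    ∀ n : Fin (Fintype.card V),
      (Λ₁ ≤ sSup (Set.range fun θ => lamφ θ n) - sSup (Set.range fun θ => lam0 θ n) ∧
        sSup (Set.range fun θ => lamφ θ n) - sSup (Set.range fun θ => lam0 θ n) ≤ Λν) ∧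
      (Λ₁ ≤ sInf (Set.range fun θ => lamφ θ n) - sInf (Set.range fun θ => lam0 θ n) ∧
        sInf (Set.range fun θ => lamφ θ n) - sInf (Set.range fun θ => lam0 θ n) ≤ Λν) :=
  fiber_band_edge_variation_general o t inv hinv hoi hti m hm φ hφ Q lamφ lam0 hlamφ hlam0 Λ₁ Λν hΛ₁
    hΛν
end
end

section
/- Let (V, E, o, t, inv) be a finite multigraph, let m : E → ℝ^d and φ : E → ℝ be 1-forms, and suppose there are edges e₁, …, e_d ∈ E such that m(e₁), …, m(e_d) are linearly independent over ℝ. Set B = {e₁, …, e_d, inv e₁, …, inv e_d}. Then there exists θ₀ ∈ ℝ^d such that, defining φ̃ : E → ℝ by φ̃(e) = φ(e) + ⟨m(e), θ₀⟩ if e ∈ (supp m ∪ supp φ) \ B and φ̃(e) = 0 otherwise, one has: φ̃ is a 1-form; Δ_{m,φ}(θ) = Δ_{m,φ̃}(θ − θ₀) for every θ ∈ ℝ^d; and #supp φ̃ ≤ #(supp m ∪ supp φ) − 2d. (Paper: Corollary 2.4(i)–(ii), formulas (wtcat), (seth), at the level of fiber operators.) -/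
open scoped Classical
open Finset

noncomputable section

/-! Choose `θ₀` with `⟨m(eᵢ), θ₀⟩ = -φ(eᵢ)`, possible since the `m(eᵢ)` form a basis of
`ℝ^d`. The gauge-shifted form `φ + ⟨m, θ₀⟩` is a 1-form, vanishes on `B` and outside
`supp m ∪ supp φ`, so it coincides with `φ̃`; and shifting `φ` by `⟨m, θ₀⟩` while shifting `θ` by
`-θ₀` leaves every phase of the fiber Laplacian unchanged. Finally `B` consists of `2d` distinct
edges of `supp m`, and `supp φ̃` avoids it. -/

open Matrix

theorem LinearIndependent.add_ne_zero {ι R M : Type*} [Ring R] [CharZero R] [AddCommGroup M]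
    [Module R M] {v : ι → M} (hv : LinearIndependent R v) (i j : ι) : v i + v j ≠ 0 := by
  intro h
  have hl : Finsupp.single i (1 : R) + Finsupp.single j 1 = 0 :=
    hv (by simp [h])
  have := DFunLike.congr_fun hl i
  by_cases hij : i = j
  · subst hij
    norm_num at this
  · simp [hij] at this

theorem exists_dotProduct_eq_of_linearIndependent {K n : Type*} [Field K] [Fintype n]
    [DecidableEq n] {v : n → n → K} (hv : LinearIndependent K v) (c : n → K) :
    ∃ θ, ∀ i, v i ⬝ᵥ θ = c i := by
  obtain ⟨θ, hθ⟩ := mulVec_surjective_iff_isUnit.2 (linearIndependent_rows_iff_isUnit.1 hv) c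
  exact ⟨θ, congrFun hθ⟩

section Reversal

variable {E ι R M : Type*} {inv : E → E}

theorem injective_sumElim_comp_reverse [Ring R] [CharZero R] [AddCommGroup M] [Module R M]
    {m : E → M} (hm : ∀ e, m (inv e) = -m e) {ed : ι → E}
    (hlin : LinearIndependent R fun i => m (ed i)) :
    Function.Injective (Sum.elim ed (inv ∘ ed)) := by
  rintro (i | i) (j | j) h <;>
    simp only [Sum.elim_inl, Sum.elim_inr, Function.comp_apply] at h
  · exact congrArg Sum.inl (hlin.injective (congrArg m h))
  · exact (hlin.add_ne_zero i j (by rw [h, hm, neg_add_cancel])).elim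
  · exact (hlin.add_ne_zero i j (by rw [← h, hm, add_neg_cancel])).elim
  · exact congrArg Sum.inr (hlin.injective (neg_inj.1 (by rw [← hm, ← hm, h])))

theorem add_dotProduct_eq_zero_of_reverse [Ring R] [Fintype M] {m : E → M → R} {φ : E → R}
    (hm : ∀ e, m (inv e) = -m e) (hφ : ∀ e, φ (inv e) = -φ e) {ed : ι → E} {θ₀ : M → R}
    (hθ₀ : ∀ i, m (ed i) ⬝ᵥ θ₀ = -φ (ed i)) {e : E} (he : ∃ i, e = ed i ∨ e = inv (ed i)) :
    φ e + m e ⬝ᵥ θ₀ = 0 := by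
  obtain ⟨i, rfl | rfl⟩ := he
  · rw [hθ₀, add_neg_cancel]
  · rw [hm, hφ, neg_dotProduct, ← neg_add, hθ₀, add_neg_cancel, neg_zero]

theorem ite_support_add_dotProduct_eq [Ring R] [Fintype M] {m : E → M → R} {φ : E → R}
    (hm : ∀ e, m (inv e) = -m e) (hφ : ∀ e, φ (inv e) = -φ e) {d : ℕ} {ed : Fin d → E} {θ₀ : M → R}
    (hθ₀ : ∀ i, m (ed i) ⬝ᵥ θ₀ = -φ (ed i)) (e : E) :
    (if (m e ≠ 0 ∨ φ e ≠ 0) ∧ (∀ i, e ≠ ed i ∧ e ≠ inv (ed i)) then φ e + m e ⬝ᵥ θ₀ else 0) =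
      φ e + m e ⬝ᵥ θ₀ := by
  split_ifs with h
  · rfl
  rcases not_and_or.1 h with hS | hB
  · push Not at hS
    rw [hS.1, hS.2, zero_dotProduct, add_zero]
  · refine (add_dotProduct_eq_zero_of_reverse hm hφ hθ₀ ?_).symm
    simpa only [not_forall, not_and_or, not_not] using hB

end Reversal

theorem suppCard_add_card_le {E W : Type} [Fintype E] [Zero W] {g : E → W} {S B : Finset E}
    (hBS : B ⊆ S) (hg : ∀ e, g e ≠ 0 → e ∈ S ∧ e ∉ B) : suppCard g + B.card ≤ S.card := by
  have hsupp : suppCard g ≤ (S \ B).card :=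
    card_le_card fun e he => mem_sdiff.2 (hg e (mem_filter.1 he).2)
  have := card_sdiff_add_card_eq_card hBS
  omega

theorem suppCard_add_two_mul_le {E R M W W' : Type} [Fintype E] [Ring R] [CharZero R]
    [AddCommGroup M] [Module R M] [Zero W] [Zero W'] {inv : E → E} {m : E → M}
    (hm : ∀ e, m (inv e) = -m e) {φ : E → W} {d : ℕ} {ed : Fin d → E}
    (hlin : LinearIndependent R fun i => m (ed i)) [DecidablePred fun e => m e ≠ 0 ∨ φ e ≠ 0]
    {g : E → W'}
    (hg : ∀ e, g e ≠ 0 → (m e ≠ 0 ∨ φ e ≠ 0) ∧ ∀ i, e ≠ ed i ∧ e ≠ inv (ed i)) :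
    suppCard g + 2 * d ≤ (univ.filter fun e => m e ≠ 0 ∨ φ e ≠ 0).card := by
  set B := univ.image (Sum.elim ed (inv ∘ ed))
  have hmemB : ∀ e, e ∈ B ↔ ∃ i, e = ed i ∨ e = inv (ed i) := by
    simp [B, Sum.exists, eq_comm, exists_or]
  have hBcard : B.card = 2 * d := by
    rw [card_image_of_injective _ (injective_sumElim_comp_reverse hm hlin), card_univ,
      Fintype.card_sum, Fintype.card_fin, two_mul]
  have hBS : B ⊆ univ.filter fun e => m e ≠ 0 ∨ φ e ≠ 0 := by
    intro e he
    obtain ⟨i, rfl | rfl⟩ := (hmemB e).1 he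
    · simpa using Or.inl (hlin.ne_zero i)
    · simpa [hm] using Or.inl (hlin.ne_zero i)
  refine hBcard ▸ suppCard_add_card_le hBS fun e he => ?_
  obtain ⟨hS, hB⟩ := hg e he
  refine ⟨by simpa using hS, fun heB => ?_⟩
  obtain ⟨i, hi | hi⟩ := (hmemB e).1 heB
  exacts [(hB i).1 hi, (hB i).2 hi]

theorem fiberLap_eq_fiberLap_sub {V E : Type} [Fintype E] {d : ℕ} (o t : E → V)
    (m : E → Fin d → ℝ) (φ : E → ℝ) (θ θ₀ : Fin d → ℝ) :
    fiberLap o t m φ θ = fiberLap o t m (fun e => φ e + m e ⬝ᵥ θ₀) (θ - θ₀) := by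
  funext f v
  unfold fiberLap
  congr 1
  refine sum_congr rfl fun e _ => ?_
  have hphase : φ e + m e ⬝ᵥ θ = φ e + m e ⬝ᵥ θ₀ + m e ⬝ᵥ (θ - θ₀) := by
    rw [dotProduct_sub]; ring
  exact congrArg (fun x : ℝ => Complex.exp (Complex.I * x) * f (t e)) hphase

theorem fiber_gauge_reduction_general
    {V E : Type} [Fintype E] {d : ℕ}
    (o t : E → V) (inv : E → E)
    (m : E → Fin d → ℝ) (hm : ∀ e, m (inv e) = - m e)
    (φ : E → ℝ) (hφ : ∀ e, φ (inv e) = - φ e)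
    (ed : Fin d → E)
    (hlin : LinearIndependent ℝ fun i => m (ed i)) :
    ∃ θ₀ : Fin d → ℝ, ∀ φt : E → ℝ,
      (∀ e, φt e =
        if (m e ≠ 0 ∨ φ e ≠ 0) ∧ (∀ i, e ≠ ed i ∧ e ≠ inv (ed i))
        then φ e + ∑ j, m e j * θ₀ j else 0) →
      (∀ e, φt (inv e) = - φt e) ∧
      (∀ (θ : Fin d → ℝ) (f : V → ℂ) (v : V),
        fiberLap o t m φ θ f v = fiberLap o t m φt (θ - θ₀) f v) ∧
      suppCard φt + 2 * d ≤ (Finset.univ.filter fun e => m e ≠ 0 ∨ φ e ≠ 0).card := by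
  obtain ⟨θ₀, hθ₀⟩ := exists_dotProduct_eq_of_linearIndependent hlin fun i => -φ (ed i)
  refine ⟨θ₀, fun φt hφt => ?_⟩
  have hφt_eq : ∀ e, φt e = φ e + m e ⬝ᵥ θ₀ := fun e =>
    (hφt e).trans (ite_support_add_dotProduct_eq hm hφ hθ₀ e)
  refine ⟨fun e => ?_, fun θ f v => ?_, ?_⟩
  · rw [hφt_eq, hφt_eq, hm, hφ, neg_dotProduct, neg_add]
  · rw [funext hφt_eq, fiberLap_eq_fiberLap_sub o t m φ θ θ₀]
  · refine suppCard_add_two_mul_le hm hlin fun e he => ?_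
    by_contra h
    exact he (by rw [hφt, if_neg h])

/-- Reduction of the magnetic parameters: if `m(e₁), …, m(e_d)` are linearly
independent, then there exists `θ₀` such that, with
`φ̃(e) = φ(e) + ⟨m(e), θ₀⟩` on `(supp m ∪ supp φ) \ B` (where
`B = {e₁,…,e_d, inv e₁,…,inv e_d}`) and `φ̃(e) = 0` otherwise, the function
`φ̃` is a 1-form, `Δ_{m,φ}(θ) = Δ_{m,φ̃}(θ − θ₀)` for all `θ`, and
`#supp φ̃ ≤ #(supp m ∪ supp φ) − 2d`. -/
theorem fiber_gauge_reduction
    {V E : Type} [Fintype V] [Fintype E] [Nonempty V] {d : ℕ}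
    (o t : E → V) (inv : E → E)
    (hfp : ∀ e, inv e ≠ e) (hinv : ∀ e, inv (inv e) = e)
    (hoi : ∀ e, o (inv e) = t e) (hti : ∀ e, t (inv e) = o e)
    (m : E → Fin d → ℝ) (hm : ∀ e, m (inv e) = - m e)
    (φ : E → ℝ) (hφ : ∀ e, φ (inv e) = - φ e)
    (ed : Fin d → E)
    (hlin : LinearIndependent ℝ fun i => m (ed i)) :
    ∃ θ₀ : Fin d → ℝ, ∀ φt : E → ℝ,
      (∀ e, φt e =
        if (m e ≠ 0 ∨ φ e ≠ 0) ∧ (∀ i, e ≠ ed i ∧ e ≠ inv (ed i))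
        then φ e + ∑ j, m e j * θ₀ j else 0) →
      (∀ e, φt (inv e) = - φt e) ∧
      (∀ (θ : Fin d → ℝ) (f : V → ℂ) (v : V),
        fiberLap o t m φ θ f v = fiberLap o t m φt (θ - θ₀) f v) ∧
      suppCard φt + 2 * d ≤ (Finset.univ.filter fun e => m e ≠ 0 ∨ φ e ≠ 0).card :=
  fiber_gauge_reduction_general o t inv m hm φ hφ ed hlin
end
end

section
/- Let (V, E, o, t, inv) be a finite multigraph, let m : E → ℝ^d and φ : E → ℝ be 1-forms, and suppose there are edges e₁, …, e_d ∈ E such that m(e₁), …, m(e_d) are linearly independent over ℝ and supp m ∪ supp φ ⊆ {e₁, …, e_d, inv e₁, …, inv e_d}. Then there exists θ₀ ∈ ℝ^d such that Δ_{m,φ}(θ) = Δ_{m,0}(θ − θ₀) for all θ ∈ ℝ^d; consequently, for every Q : V → ℝ the total spectra coincide: ⋃_{θ ∈ ℝ^d} (set of eigenvalues of Δ_{m,φ}(θ) + Q) = ⋃_{θ ∈ ℝ^d} (set of eigenvalues of Δ_{m,0}(θ) + Q). (Paper: Corollary 2.4(ii): if I_{μ,φ} = d then the magnetic Schrödinger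 operator is unitarily equivalent to the one without magnetic field; fiber-operator formulation.) -/
open scoped Classical
open Finset

noncomputable section

/-- If `supp m ∪ supp φ` consists of edges `e₁,…,e_d` (and their inverses) with
`m(e₁),…,m(e_d)` linearly independent, then there is `θ₀` with
`Δ_{m,φ}(θ) = Δ_{m,0}(θ − θ₀)` for all `θ`; consequently for every potential
`Q` the total spectra of `Δ_{m,φ}(·) + Q` and `Δ_{m,0}(·) + Q` coincide. -/
theorem fiber_trivial_magnetic_field
    {V E : Type} [Fintype V] [Fintype E] [Nonempty V] {d : ℕ}
    (o t : E → V) (inv : E → E)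
    (hfp : ∀ e, inv e ≠ e) (hinv : ∀ e, inv (inv e) = e)
    (hoi : ∀ e, o (inv e) = t e) (hti : ∀ e, t (inv e) = o e)
    (m : E → Fin d → ℝ) (hm : ∀ e, m (inv e) = - m e)
    (φ : E → ℝ) (hφ : ∀ e, φ (inv e) = - φ e)
    (ed : Fin d → E)
    (hlin : LinearIndependent ℝ fun i => m (ed i))
    (hsupp : ∀ e, (m e ≠ 0 ∨ φ e ≠ 0) → ∃ i, e = ed i ∨ e = inv (ed i)) :
    ∃ θ₀ : Fin d → ℝ,
      (∀ (θ : Fin d → ℝ) (f : V → ℂ) (v : V),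
        fiberLap o t m φ θ f v = fiberLap o t m (fun _ => 0) (θ - θ₀) f v) ∧
      ∀ Q : V → ℝ,
        {x : ℝ | ∃ (θ : Fin d → ℝ) (f : V → ℂ), f ≠ 0 ∧
          ∀ v, fiberLap o t m φ θ f v + (Q v : ℂ) * f v = (x : ℂ) * f v} =
        {x : ℝ | ∃ (θ : Fin d → ℝ) (f : V → ℂ), f ≠ 0 ∧
          ∀ v, fiberLap o t m (fun _ => 0) θ f v + (Q v : ℂ) * f v = (x : ℂ) * f v} := by
  classical
  -- Build the matrix with rows `m (ed i)` and invert it.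
  set M : Matrix (Fin d) (Fin d) ℝ := fun i j => m (ed i) j with hM
  have hMunit : IsUnit M := Matrix.linearIndependent_rows_iff_isUnit.mp hlin
  set θ₀ : Fin d → ℝ := M⁻¹.mulVec (fun i => - φ (ed i)) with hθ₀
  have hMθ₀ : M.mulVec θ₀ = fun i => - φ (ed i) := by
    rw [hθ₀, Matrix.mulVec_mulVec, Matrix.mul_nonsing_inv _ ((Matrix.isUnit_iff_isUnit_det M).mp hMunit),
      Matrix.one_mulVec]
  have hkey : ∀ e, φ e + ∑ j, m e j * θ₀ j = 0 := by
    intro e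
    by_cases h : m e = 0 ∧ φ e = 0
    · simp [h.1, h.2]
    · have h' : m e ≠ 0 ∨ φ e ≠ 0 := by tauto
      obtain ⟨i, hi⟩ := hsupp e h'
      have hedi : φ (ed i) + ∑ j, m (ed i) j * θ₀ j = 0 := by
        have := congrFun hMθ₀ i
        simp only [Matrix.mulVec, dotProduct, hM] at this
        linarith [this]
      rcases hi with rfl | rfl
      · exact hedi
      · simp only [hm, hφ, Pi.neg_apply, neg_mul]
        rw [Finset.sum_neg_distrib] at *
        linarith [hedi]
  have hexp : ∀ (e : E) (θ : Fin d → ℝ),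
      (φ e + ∑ j, m e j * θ j) = ((0:ℝ) + ∑ j, m e j * (θ j - θ₀ j)) := by
    intro e θ
    have := hkey e
    simp only [mul_sub, Finset.sum_sub_distrib, zero_add]
    linarith
  have hmain : ∀ (θ : Fin d → ℝ) (f : V → ℂ) (v : V),
      fiberLap o t m φ θ f v = fiberLap o t m (fun _ => 0) (θ - θ₀) f v := by
    intro θ f v
    unfold fiberLap
    congr 1
    apply Finset.sum_congr rfl
    intro e _
    congr 3
    exact_mod_cast hexp e θ
  refine ⟨θ₀, hmain, ?_⟩
  intro Q
  ext x
  simp only [Set.mem_setOf_eq]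
  constructor
  · rintro ⟨θ, f, hf, hef⟩
    exact ⟨θ - θ₀, f, hf, fun v => by rw [← hmain θ f v]; exact hef v⟩
  · rintro ⟨θ, f, hf, hef⟩
    refine ⟨θ + θ₀, f, hf, fun v => ?_⟩
    rw [hmain (θ + θ₀) f v]
    simpa using hef v
end
end

section
/- Let (V, E, o, t, inv) be a finite connected multigraph, let E_T ⊆ E be (the edge set of) a spanning tree, and let γ : E → ℝ^n be a 1-form vanishing on E_T. Suppose there exists a set S ⊆ supp γ with S ∩ inv(S) = ∅ and S ∪ inv(S) = supp γ such that the family of vectors {γ(e) : e ∈ S} is linearly independent over ℚ (as elements of the ℚ-vector space ℝ^n). Then γ is a minimal form: every 1-form b : E → ℝ^n having the same flux function as γ satisfies #supp γ ≤ #supp b. (Paper: Theorem 3.1(v).) -/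
open scoped Classical
open Finset

noncomputable section

/-!
Each value `γ e` is the flux of `γ` along the closed walk made of `e` and the tree path from
`t e` back to `o e`, so it is also the flux of `b` along that walk, an integer combination of
values of `b`. Hence the `ℚ`-span of the values of `b` contains the `#S` independent vectors
`γ e`, `e ∈ S`; as `b (inv e) = -b e`, that span is spanned by the values of `b` on one
orientation of each edge of its support. So `#S ≤ suppCard b / 2`, while `suppCard γ = 2 * #S`.
-/

open Module Submodule

section Orientation

variable {E : Type} {inv : E → E}

structure IsOrientation (inv : E → E) (p : E → Prop) (T : Finset E) : Prop where
  prop_of_mem : ∀ e ∈ T, p e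
  inv_notMem : ∀ e ∈ T, inv e ∉ T
  mem_or_inv_mem : ∀ e, p e → e ∈ T ∨ inv e ∈ T

theorem exists_isOrientation [Fintype E] (hinv : Function.Involutive inv)
    (hfp : ∀ e, inv e ≠ e) (p : E → Prop) (hp : ∀ e, p e → p (inv e)) :
    ∃ T, IsOrientation inv p T := by
  let : LinearOrder E := IsWellOrder.linearOrder WellOrderingRel
  refine ⟨univ.filter fun e => p e ∧ e < inv e, ⟨?_, ?_, ?_⟩⟩
  · intro e he
    exact (mem_filter.1 he).2.1
  · intro e he he'
    have hlt := (mem_filter.1 he).2.2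
    have hlt' := (mem_filter.1 he').2.2
    rw [hinv e] at hlt'
    exact lt_asymm hlt hlt'
  · intro e he
    rcases (hfp e).lt_or_gt with h | h
    · exact Or.inr (mem_filter.2 ⟨mem_univ _, hp e he, by rwa [hinv e]⟩)
    · exact Or.inl (mem_filter.2 ⟨mem_univ _, he, h⟩)

variable {W : Type} {b : E → W}

theorem IsOrientation.suppCard_eq [AddGroup W] [Fintype E] (hinv : Function.Involutive inv)
    (hb : ∀ e, b (inv e) = -b e) {T : Finset E} (hT : IsOrientation inv (b · ≠ 0) T) :
    suppCard b = 2 * #T := by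
  have hsupp : univ.filter (fun e => b e ≠ 0) = T ∪ T.image inv := by
    ext e
    simp only [mem_filter, mem_univ, true_and, mem_union, mem_image]
    constructor
    · intro he
      rcases hT.mem_or_inv_mem e he with h | h
      · exact Or.inl h
      · exact Or.inr ⟨inv e, h, hinv e⟩
    · rintro (h | ⟨f, hf, rfl⟩)
      · exact hT.prop_of_mem e h
      · simpa [hb] using hT.prop_of_mem f hf
  have hdisj : Disjoint T (T.image inv) := by
    rw [disjoint_left]
    intro e he he'
    obtain ⟨f, hf, rfl⟩ := mem_image.1 he'
    exact hT.inv_notMem f hf he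
  unfold suppCard
  rw [hsupp, card_union_of_disjoint hdisj, card_image_of_injective _ hinv.injective]
  ring

theorem IsOrientation.finrank_span_range_le_card [AddCommGroup W] {K : Type*} [DivisionRing K]
    [Module K W] (hb : ∀ e, b (inv e) = -b e) {T : Finset E}
    (hT : IsOrientation inv (b · ≠ 0) T) :
    finrank K (span K (Set.range b)) ≤ #T := by
  have hrange : Set.range b ⊆ span K (Set.range fun e : T => b e) := by
    rintro _ ⟨e, rfl⟩
    by_cases he : b e = 0
    · rw [he]
      exact zero_mem _
    rcases hT.mem_or_inv_mem e he with h | h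
    · exact subset_span ⟨⟨e, h⟩, rfl⟩
    · have hmem : b (inv e) ∈ span K (Set.range fun e : T => b e) := subset_span ⟨⟨inv e, h⟩, rfl⟩
      simpa [hb] using neg_mem hmem
  have : Module.Finite K (span K (Set.range fun e : T => b e)) :=
    FiniteDimensional.span_of_finite K (Set.finite_range _)
  calc finrank K (span K (Set.range b))
      ≤ finrank K (span K (Set.range fun e : T => b e)) :=
        finrank_mono (span_le.2 hrange)
    _ ≤ Fintype.card T := finrank_range_le_card _
    _ = #T := Fintype.card_coe T

end Orientation

section Flux

variable {V E : Type} {o t : E → V}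

theorem isClosedWalk_cons {e : E} {k : ℕ} {c : Fin (k + 1) → E}
    (hc : ∀ i : Fin k, t (c i.castSucc) = o (c i.succ)) (h0 : o (c 0) = t e)
    (hlast : t (c (Fin.last k)) = o e) :
    IsClosedWalk o t (Fin.cons e c : Fin (k + 2) → E) := by
  refine ⟨fun i => ?_, hlast⟩
  cases i using Fin.cases with
  | zero => exact h0.symm
  | succ j => exact hc j

variable {W : Type} [AddCommMonoid W]

theorem exists_isClosedWalk_sum_eq (ET : Finset E)
    (hETconn : ∀ u v : V, u ≠ v → ∃ (k : ℕ) (c : Fin (k + 1) → E),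
      (∀ i, c i ∈ ET) ∧ (∀ i : Fin k, t (c i.castSucc) = o (c i.succ)) ∧
      o (c 0) = u ∧ t (c (Fin.last k)) = v)
    {γ : E → W} (hγT : ∀ e ∈ ET, γ e = 0) (e : E) :
    ∃ (k : ℕ) (c : Fin (k + 1) → E), IsClosedWalk o t c ∧ ∑ i, γ (c i) = γ e := by
  by_cases hloop : t e = o e
  · exact ⟨0, fun _ => e, ⟨fun i => i.elim0, hloop⟩, by simp⟩
  obtain ⟨k, c, hcET, hc, h0, hlast⟩ := hETconn (t e) (o e) hloop
  refine ⟨k + 1, Fin.cons e c, isClosedWalk_cons hc h0 hlast, ?_⟩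
  simp [Fin.sum_univ_succ, hγT _ (hcET _)]

theorem SameFlux.mem_span_range {R : Type*} [Semiring R] [Module R W] {γ b : E → W}
    (hflux : SameFlux o t γ b) (ET : Finset E)
    (hETconn : ∀ u v : V, u ≠ v → ∃ (k : ℕ) (c : Fin (k + 1) → E),
      (∀ i, c i ∈ ET) ∧ (∀ i : Fin k, t (c i.castSucc) = o (c i.succ)) ∧
      o (c 0) = u ∧ t (c (Fin.last k)) = v)
    (hγT : ∀ e ∈ ET, γ e = 0) (e : E) :
    γ e ∈ span R (Set.range b) := by
  obtain ⟨k, c, hc, hsum⟩ := exists_isClosedWalk_sum_eq ET hETconn hγT e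
  rw [← hsum, hflux k c hc]
  exact sum_mem fun i _ => subset_span ⟨c i, rfl⟩

end Flux

theorem minimal_form_rational_independence_general
    {V E : Type} [Fintype E] {n : ℕ}
    (o t : E → V) (inv : E → E)
    (hfp : ∀ e, inv e ≠ e) (hinv : ∀ e, inv (inv e) = e)
    (ET : Finset E)
    (hETconn : ∀ u v : V, u ≠ v → ∃ (k : ℕ) (c : Fin (k + 1) → E),
      (∀ i, c i ∈ ET) ∧ (∀ i : Fin k, t (c i.castSucc) = o (c i.succ)) ∧
      o (c 0) = u ∧ t (c (Fin.last k)) = v)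
    (γ : E → Fin n → ℝ) (hγ : ∀ e, γ (inv e) = - γ e)
    (hγT : ∀ e ∈ ET, γ e = 0)
    (S : Finset E)
    (hS1 : ∀ e ∈ S, γ e ≠ 0)
    (hS2 : ∀ e ∈ S, inv e ∉ S)
    (hS3 : ∀ e, γ e ≠ 0 → e ∈ S ∨ inv e ∈ S)
    (hind : LinearIndependent ℚ fun e : {e // e ∈ S} => γ e.1) :
    ∀ b : E → Fin n → ℝ, (∀ e, b (inv e) = - b e) → SameFlux o t γ b →
      suppCard γ ≤ suppCard b := by
  intro b hb hflux
  obtain ⟨T, hT⟩ := exists_isOrientation hinv hfp (b · ≠ 0) fun e he => by simpa [hb] using he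
  have hspan : span ℚ (Set.range fun e : S => γ e) ≤ span ℚ (Set.range b) :=
    span_le.2 <| Set.range_subset_iff.2 fun e => hflux.mem_span_range ET hETconn hγT e
  have : Module.Finite ℚ (span ℚ (Set.range b)) :=
    FiniteDimensional.span_of_finite ℚ (Set.finite_range b)
  have hST : #S ≤ #T :=
    calc #S = finrank ℚ (span ℚ (Set.range fun e : S => γ e)) :=
          (Fintype.card_coe S).symm.trans (finrank_span_eq_card hind).symm
      _ ≤ finrank ℚ (span ℚ (Set.range b)) := finrank_mono hspan
      _ ≤ #T := hT.finrank_span_range_le_card hb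
  rw [IsOrientation.suppCard_eq hinv hγ ⟨hS1, hS2, hS3⟩, hT.suppCard_eq hinv hb]
  omega

/-- If `γ` is a 1-form vanishing on a spanning tree whose nonzero values (one
per geometric edge, listed by the set `S`) are linearly independent over `ℚ`,
then `γ` is minimal: every 1-form with the same flux function has support at
least as large. -/
theorem minimal_form_rational_independence
    {V E : Type} [Fintype V] [Fintype E] [Nonempty V] {n : ℕ}
    (o t : E → V) (inv : E → E)
    (hfp : ∀ e, inv e ≠ e) (hinv : ∀ e, inv (inv e) = e)
    (hoi : ∀ e, o (inv e) = t e) (hti : ∀ e, t (inv e) = o e)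
    (hconn : MGConnected o t)
    (ET : Finset E)
    (hETinv : ∀ e ∈ ET, inv e ∈ ET)
    (hETcard : ET.card = 2 * (Fintype.card V - 1))
    (hETconn : ∀ u v : V, u ≠ v → ∃ (k : ℕ) (c : Fin (k + 1) → E),
      (∀ i, c i ∈ ET) ∧ (∀ i : Fin k, t (c i.castSucc) = o (c i.succ)) ∧
      o (c 0) = u ∧ t (c (Fin.last k)) = v)
    (γ : E → Fin n → ℝ) (hγ : ∀ e, γ (inv e) = - γ e)
    (hγT : ∀ e ∈ ET, γ e = 0)
    (S : Finset E)
    (hS1 : ∀ e ∈ S, γ e ≠ 0)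
    (hS2 : ∀ e ∈ S, inv e ∉ S)
    (hS3 : ∀ e, γ e ≠ 0 → e ∈ S ∨ inv e ∈ S)
    (hind : LinearIndependent ℚ fun e : {e // e ∈ S} => γ e.1) :
    ∀ b : E → Fin n → ℝ, (∀ e, b (inv e) = - b e) → SameFlux o t γ b →
      suppCard γ ≤ suppCard b :=
  minimal_form_rational_independence_general o t inv hfp hinv ET hETconn γ hγ hγT S hS1 hS2 hS3 hind
end
end

section
/- Let (V, E, o, t, inv) be a finite connected multigraph and let x : E → ℝ^d be a 1-form such that the set of fluxes of x along all closed walks equals ℤ^d. Then every minimal form μ in F(x) (i.e. every 1-form μ with the same flux function as x and with #supp μ ≤ #supp b for every 1-form b with the same flux function as x) satisfies d ≤ (1/2)·#supp μ ≤ β, where β = #E/2 − #V + 1 is the Betti number of the multigraph. (Paper: Proposition 2.2(i), the inequalities d ≤ I ≤ β, stated on the fundamental graph.) -/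
open scoped Classical
open Finset

noncomputable section

def treeF {V E : Type} {d : ℕ} (o : E → V) (x : E → Fin d → ℝ) (v₀ : V) (p : V → E) :
    ℕ → V → Fin d → ℝ
  | 0, _ => 0
  | n+1, v => if v = v₀ then 0 else treeF o x v₀ p n (o (p v)) + x (p v)

theorem treeF_zero {V E : Type} {d : ℕ} (o : E → V) (x : E → Fin d → ℝ) (v₀ : V) (p : V → E)
    (v : V) : treeF o x v₀ p 0 v = 0 := rfl

theorem treeF_succ {V E : Type} {d : ℕ} (o : E → V) (x : E → Fin d → ℝ) (v₀ : V) (p : V → E)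
    (n : ℕ) (v : V) :
    treeF o x v₀ p (n+1) v = if v = v₀ then 0 else treeF o x v₀ p n (o (p v)) + x (p v) := by
  rfl

/-- If the fluxes of the 1-form `x` along all closed walks form exactly `ℤ^d`,
then every minimal form `μ ∈ F(x)` satisfies `d ≤ (1/2)·#supp μ ≤ β`, where
`β = #E/2 − #V + 1` is the Betti number. -/
theorem minimal_form_betti_bounds
    {V E : Type} [Fintype V] [Fintype E] [Nonempty V] {d : ℕ}
    (o t : E → V) (inv : E → E)
    (hfp : ∀ e, inv e ≠ e) (hinv : ∀ e, inv (inv e) = e)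
    (hoi : ∀ e, o (inv e) = t e) (hti : ∀ e, t (inv e) = o e)
    (hconn : MGConnected o t)
    (x : E → Fin d → ℝ) (hx : ∀ e, x (inv e) = - x e)
    (hflux : fluxSet o t x = intLattice d) :
    ∀ μ : E → Fin d → ℝ, (∀ e, μ (inv e) = - μ e) → SameFlux o t x μ →
      (∀ b : E → Fin d → ℝ, (∀ e, b (inv e) = - b e) → SameFlux o t x b →
        suppCard μ ≤ suppCard b) →
      2 * d ≤ suppCard μ ∧
        (suppCard μ : ℤ) ≤ (Fintype.card E : ℤ) - 2 * Fintype.card V + 2 := by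
  
  intro μ hμinv hμflux hmin
  constructor
  · have hsingle : ∀ i : Fin d, Pi.single i (1:ℝ) ∈ Submodule.span ℝ (Set.range μ) := by
      intro i
      have h1 : Pi.single i (1:ℝ) ∈ intLattice d := by
        intro j
        by_cases h : j = i
        · exact ⟨1, by subst h; simp⟩
        · exact ⟨0, by simp [Pi.single_apply, h]⟩
      rw [← hflux] at h1
      obtain ⟨k, c, hc, hsum⟩ := h1
      rw [hμflux k c hc] at hsum
      rw [← hsum]
      exact Submodule.sum_mem _ (fun j _ => Submodule.subset_span ⟨c j, rfl⟩)
    have hdle : d ≤ Module.finrank ℝ (Submodule.span ℝ (Set.range μ)) := by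
      have hli0 : LinearIndependent ℝ (fun i : Fin d => Pi.single i (1:ℝ)) := by
        have := (Pi.basisFun ℝ (Fin d)).linearIndependent
        have h : ⇑(Pi.basisFun ℝ (Fin d)) = fun i : Fin d => Pi.single i (1:ℝ) := by
          funext i
          exact Pi.basisFun_apply ℝ (Fin d) i
        rwa [h] at this
      have hli : LinearIndependent ℝ
          (fun i : Fin d => (⟨Pi.single i 1, hsingle i⟩ : Submodule.span ℝ (Set.range μ))) :=
        LinearIndependent.of_comp (Submodule.span ℝ (Set.range μ)).subtype hli0
      simpa using hli.fintype_card_le_finrank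
    obtain ⟨s, hs_sub, hs_span, hs_li⟩ := exists_linearIndependent ℝ (Set.range μ)
    have hsfin : s.Finite := (Set.finite_range μ).subset hs_sub
    haveI : Fintype s := hsfin.fintype
    have hrank : Module.finrank ℝ (Submodule.span ℝ (Set.range μ)) = s.toFinset.card := by
      rw [← hs_span, finrank_span_set_eq_card hs_li]
    rcases Set.eq_empty_or_nonempty s with hs | ⟨v1, hv1⟩
    · have h0 : Module.finrank ℝ (Submodule.span ℝ (Set.range μ)) = 0 := by
        rw [hrank]; simp [hs]
      omega
    · obtain ⟨e1, he1⟩ := hs_sub hv1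
      haveI : Nonempty E := ⟨e1⟩
      have hch : ∀ v ∈ s, ∃ e, μ e = v := fun v hv => hs_sub hv
      choose! ev hev using hch
      have hzero : ∀ a ∈ s, a ≠ 0 := by
        intro a ha h0
        exact hs_li.ne_zero ⟨a, ha⟩ (by simpa using h0)
      have hne : ∀ a ∈ s, ∀ b ∈ s, a ≠ -b := by
        intro a ha b hb hab
        by_cases h : a = b
        · subst h
          apply hzero a ha
          funext j
          have := congrFun hab j
          simp only [Pi.neg_apply] at this
          have : a j = 0 := by linarith
          simpa using this
        · have hinj : Function.Injective
              (fun i : Bool => cond i (⟨a, ha⟩ : s) ⟨b, hb⟩) := by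
            intro i j hij
            cases i <;> cases j <;>
              simp only [Bool.cond_true, Bool.cond_false, Subtype.mk.injEq] at hij <;> first
              | rfl
              | exact absurd hij.symm h
              | exact absurd hij h
          have hli2 := hs_li.comp _ hinj
          have h10 := Fintype.linearIndependent_iff.mp hli2 (fun _ => 1) ?_ true
          · exact one_ne_zero h10
          · simp [Fintype.sum_bool, hab]
      have hA : (s.toFinset.image ev).card = s.toFinset.card := by
        apply Finset.card_image_of_injOn
        intro a ha b hb hab
        have ha' : a ∈ s := by simpa using ha
        have hb' : b ∈ s := by simpa using hb
        have := congrArg μ hab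
        rwa [hev a ha', hev b hb'] at this
      have hB : (s.toFinset.image (fun v => inv (ev v))).card = s.toFinset.card := by
        apply Finset.card_image_of_injOn
        intro a ha b hb hab
        have ha' : a ∈ s := by simpa using ha
        have hb' : b ∈ s := by simpa using hb
        have h1 : ev a = ev b := by
          have := congrArg inv hab; rwa [hinv, hinv] at this
        have := congrArg μ h1
        rwa [hev a ha', hev b hb'] at this
      have hdisj : Disjoint (s.toFinset.image ev) (s.toFinset.image (fun v => inv (ev v))) := by
        rw [Finset.disjoint_left]
        intro e heA heB
        obtain ⟨a, ha, rfl⟩ := Finset.mem_image.mp heA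
        obtain ⟨b, hb, hEq⟩ := Finset.mem_image.mp heB
        have ha' : a ∈ s := by simpa using ha
        have hb' : b ∈ s := by simpa using hb
        have : a = -b := by
          have h2 := congrArg μ hEq
          rw [hμinv, hev a ha', hev b hb'] at h2
          exact h2.symm
        exact hne a ha' b hb' this
      have hsub2 : (s.toFinset.image ev) ∪ (s.toFinset.image (fun v => inv (ev v)))
          ⊆ Finset.univ.filter (fun e => μ e ≠ 0) := by
        intro e he
        simp only [Finset.mem_union, Finset.mem_image] at he
        simp only [Finset.mem_filter, Finset.mem_univ, true_and]
        rcases he with ⟨a, ha, rfl⟩ | ⟨a, ha, rfl⟩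
        · have ha' : a ∈ s := by simpa using ha
          rw [hev a ha']; exact hzero a ha'
        · have ha' : a ∈ s := by simpa using ha
          rw [hμinv, hev a ha']
          simpa using hzero a ha'
      have hcard : 2 * s.toFinset.card ≤ suppCard μ := by
        have h3 := Finset.card_le_card hsub2
        rw [Finset.card_union_of_disjoint hdisj, hA, hB] at h3
        have h5 : suppCard μ = #(Finset.univ.filter (fun e => μ e ≠ 0)) := by
          unfold suppCard
          congr 1
          exact Finset.filter_congr_decidable _ _ _
        omega
      omega
  · have hV1' : 1 ≤ Fintype.card V := Fintype.card_pos
    have hsm : suppCard μ ≤ Fintype.card E := by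
      unfold suppCard
      exact Finset.card_le_univ _
    by_cases hV1 : Fintype.card V ≤ 1
    · omega
    · push_neg at hV1
      obtain ⟨v₀⟩ := (inferInstance : Nonempty V)
      obtain ⟨v1, hv1⟩ := Fintype.exists_ne_of_one_lt_card hV1 v₀
      obtain ⟨k0, c0, -, -, -⟩ := hconn v₀ v1 (Ne.symm hv1)
      haveI : Nonempty E := ⟨c0 0⟩
      have hP : ∀ v : V, v ≠ v₀ → ∃ k : ℕ, ∃ c : Fin (k+1) → E,
          (∀ i : Fin k, t (c i.castSucc) = o (c i.succ)) ∧ o (c 0) = v₀ ∧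
            t (c (Fin.last k)) = v := by
        intro v hv
        exact hconn v₀ v (fun hh => hv hh.symm)
      set D : V → ℕ := fun v => if h : v = v₀ then 0 else Nat.find (hP v h) + 1 with hD
      have hkey : ∀ v, v ≠ v₀ → ∃ e, t e = v ∧ D (o e) < D v := by
        intro v h
        have hspec := Nat.find_spec (hP v h)
        set k := Nat.find (hP v h) with hk
        obtain ⟨c, hchain, h0, hlast⟩ := hspec
        refine ⟨c (Fin.last k), hlast, ?_⟩
        have hDv : D v = k + 1 := by simp only [hD]; rw [dif_neg h]
        rw [hDv]
        by_cases ho : o (c (Fin.last k)) = v₀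
        · have : D (o (c (Fin.last k))) = 0 := by simp only [hD]; rw [dif_pos ho]
          omega
        · have hk1 : k ≠ 0 := by
            intro h0k
            apply ho
            have hl0 : Fin.last k = (⟨0, by omega⟩ : Fin (k+1)) := by
              ext; simp [h0k]
            rw [hl0]
            have h00 : (⟨0, by omega⟩ : Fin (k+1)) = 0 := by ext; simp
            rw [h00, h0]
          have hPle : Nat.find (hP (o (c (Fin.last k))) ho) ≤ k - 1 := by
            apply Nat.find_le
            refine ⟨fun j => c ⟨j.val, by have := j.isLt; omega⟩, ?_, ?_, ?_⟩
            · intro i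
              have hi := i.isLt
              exact hchain ⟨i.val, by omega⟩
            · simp only [Fin.val_zero, Fin.mk_zero]
              exact h0
            · have h1 := hchain ⟨k-1, by omega⟩
              have h2 : ((⟨k-1, by omega⟩ : Fin k).succ) = Fin.last k := by
                ext; simp; omega
              rw [h2] at h1
              exact h1
          have : D (o (c (Fin.last k))) = Nat.find (hP (o (c (Fin.last k))) ho) + 1 := by
            simp only [hD]; rw [dif_neg ho]
          omega
      have hkey' : ∀ v, ∃ e, v ≠ v₀ → (t e = v ∧ D (o e) < D v) := by
        intro v
        by_cases h : v = v₀
        · exact ⟨Classical.arbitrary E, fun h' => absurd h h'⟩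
        · exact ⟨(hkey v h).choose, fun _ => (hkey v h).choose_spec⟩
      choose p hp using hkey'
      set N := Finset.univ.sup D with hN
      have hDN : ∀ v, D v ≤ N := fun v => Finset.le_sup (Finset.mem_univ v)
      have hstab : ∀ n, ∀ v : V, D v ≤ n → treeF o x v₀ p (n+1) v = treeF o x v₀ p n v := by
        intro n
        induction n with
        | zero =>
          intro v hv
          have hv0 : v = v₀ := by
            by_contra hcon
            have : D v = Nat.find (hP v hcon) + 1 := by simp only [hD]; rw [dif_neg hcon]
            omega
          rw [treeF_succ, if_pos hv0, treeF_zero]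
        | succ n ih =>
          intro v hv
          by_cases h : v = v₀
          · conv_lhs => rw [treeF_succ]
            conv_rhs => rw [treeF_succ]
            rw [if_pos h, if_pos h]
          · have h2 : D (o (p v)) ≤ n := by
              have := (hp v h).2
              omega
            conv_lhs => rw [treeF_succ]
            conv_rhs => rw [treeF_succ]
            rw [if_neg h, if_neg h, ih _ h2]
      set f : V → Fin d → ℝ := treeF o x v₀ p N with hf
      have hrec : ∀ v, v ≠ v₀ → f v = f (o (p v)) + x (p v) := by
        intro v h
        have h1 : treeF o x v₀ p (N+1) v = treeF o x v₀ p N v := hstab N v (hDN v)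
        rw [hf, ← h1, treeF_succ, if_neg h]
      set b : E → Fin d → ℝ := fun e => x e - (f (t e) - f (o e)) with hb
      have hbinv : ∀ e, b (inv e) = - b e := by
        intro e
        simp only [hb, hx e, hoi e, hti e]
        abel
      have hbflux : SameFlux o t x b := by
        intro k c hc
        have htel : ∑ i : Fin (k+1), f (t (c i)) = ∑ i : Fin (k+1), f (o (c i)) := by
          have h1 : ∀ i : Fin (k+1), f (t (c i)) = f (o (c (finRotate (k+1) i))) := by
            intro i
            induction i using Fin.lastCases with
            | last => rw [finRotate_last, hc.2]
            | cast j =>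
              rw [finRotate_succ_apply]
              rw [Fin.coeSucc_eq_succ, hc.1 j]
          calc ∑ i : Fin (k+1), f (t (c i))
              = ∑ i : Fin (k+1), f (o (c (finRotate (k+1) i))) :=
                Finset.sum_congr rfl fun i _ => h1 i
            _ = ∑ i : Fin (k+1), f (o (c i)) :=
                Equiv.sum_comp (finRotate (k+1)) (fun j => f (o (c j)))
        simp only [hb]
        rw [Finset.sum_sub_distrib, Finset.sum_sub_distrib, htel]
        abel
      set S : Finset E := (Finset.univ.erase v₀).image p ∪
          (Finset.univ.erase v₀).image (fun v => inv (p v)) with hS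
      have hzero1 : ∀ v, v ≠ v₀ → b (p v) = 0 := by
        intro v hv
        have h1 := (hp v hv).1
        have h2 := hrec v hv
        have h3 : b (p v) = x (p v) - (f (t (p v)) - f (o (p v))) := rfl
        rw [h3, h1, h2]
        abel
      have hbzero : ∀ e ∈ S, b e = 0 := by
        intro e he
        simp only [hS, Finset.mem_union, Finset.mem_image] at he
        rcases he with ⟨v, hv, rfl⟩ | ⟨v, hv, rfl⟩
        · exact hzero1 v (Finset.ne_of_mem_erase hv)
        · rw [hbinv, hzero1 v (Finset.ne_of_mem_erase hv), neg_zero]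
      have hScard : S.card = 2 * (Fintype.card V - 1) := by
        have hinj1 : Set.InjOn p ↑(Finset.univ.erase v₀) := by
          intro a ha b2 hb2 hab
          have ha' : a ≠ v₀ := Finset.ne_of_mem_erase (Finset.mem_coe.mp ha)
          have hb' : b2 ≠ v₀ := Finset.ne_of_mem_erase (Finset.mem_coe.mp hb2)
          rw [← (hp a ha').1, ← (hp b2 hb').1, hab]
        have hinj2 : Set.InjOn (fun v => inv (p v)) ↑(Finset.univ.erase v₀) := by
          intro a ha b2 hb2 hab
          have ha' : a ≠ v₀ := Finset.ne_of_mem_erase (Finset.mem_coe.mp ha)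
          have hb' : b2 ≠ v₀ := Finset.ne_of_mem_erase (Finset.mem_coe.mp hb2)
          have h1 : p a = p b2 := by
            have := congrArg inv hab
            simpa [hinv] using this
          rw [← (hp a ha').1, ← (hp b2 hb').1, h1]
        have hdisj : Disjoint ((Finset.univ.erase v₀).image p)
            ((Finset.univ.erase v₀).image (fun v => inv (p v))) := by
          rw [Finset.disjoint_left]
          intro e he1 he2
          obtain ⟨a, ha, rfl⟩ := Finset.mem_image.mp he1
          obtain ⟨c2, hc2, heq⟩ := Finset.mem_image.mp he2
          have ha' : a ≠ v₀ := Finset.ne_of_mem_erase ha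
          have hc2' : c2 ≠ v₀ := Finset.ne_of_mem_erase hc2
          have h1 : o (p a) = c2 := by
            rw [← heq, hoi, (hp c2 hc2').1]
          have h2 : a = o (p c2) := by
            have h3 : t (inv (p c2)) = t (p a) := by rw [heq]
            rw [hti, (hp a ha').1] at h3
            exact h3.symm
          have d1 := (hp a ha').2
          have d2 := (hp c2 hc2').2
          rw [h1] at d1
          rw [← h2] at d2
          omega
        rw [hS, Finset.card_union_of_disjoint hdisj, Finset.card_image_of_injOn hinj1,
          Finset.card_image_of_injOn hinj2, Finset.card_erase_of_mem (Finset.mem_univ v₀),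
          Finset.card_univ]
        omega
      have hmono := hmin b hbinv hbflux
      have hsupp : suppCard b ≤ Fintype.card E - S.card := by
        have hsub : Finset.univ.filter (fun e => b e ≠ 0) ⊆ Finset.univ \ S := by
          intro e he
          simp only [Finset.mem_filter] at he
          simp only [Finset.mem_sdiff, Finset.mem_univ, true_and]
          intro heS
          exact he.2 (hbzero e heS)
        have h5 : suppCard b = #(Finset.univ.filter (fun e => b e ≠ 0)) := by
          unfold suppCard
          congr 1
          exact Finset.filter_congr_decidable _ _ _
        calc suppCard b = #(Finset.univ.filter (fun e => b e ≠ 0)) := h5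
          _ ≤ #(Finset.univ \ S) := Finset.card_le_card hsub
          _ = Fintype.card E - S.card := by
              rw [Finset.card_sdiff_of_subset (Finset.subset_univ S), Finset.card_univ]
      have hSle : S.card ≤ Fintype.card E := by
        calc S.card ≤ #(Finset.univ : Finset E) := Finset.card_le_card (Finset.subset_univ S)
          _ = Fintype.card E := Finset.card_univ
      rw [hScard] at hsupp hSle
      omega
end
end
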